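/- arXiv:2012.11030 — 4 statements merged into one kernel-verified Lean document; each statement's English description precedes it below -/
import Mathlib

section
/- Let x,y,z,w be vertices of V′ = V − {p} lying in four distinct ∼-classes, with ε(x,y,z) = ε(x,z,w) = 1. Then {O_{xy}, O_{yz}, O_{zw}, O_{wx}} is a partition of W′ = W − {q}, and ε(y,z,w) = ε(y,w,x) = 1. -/
open scoped Classical

section Defs

variable {V : Type*} {W : Type*}

/-- A map `V³ → ℤ` alternating in its arguments. -/
def IsAlt (f : V → V → V → ℤ) : Prop :=
  (∀ a b c, f b a c = - f a b c) ∧ (∀ a b c, f a c b = - f a b c)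

/-- The simplicial cocycle identity. -/
def IsCocycle (f : V → V → V → ℤ) : Prop :=
  ∀ a b c d, f b c d - f a c d + f a b d - f a b c = 0

/-- A linking function on `V`. -/
def IsLinkingFun (f : V → V → V → ℤ) : Prop := IsAlt f ∧ IsCocycle f

/-- A cycle in the complete graph on `V`: a list of at least 3 distinct vertices. -/
def IsCycle (C : List V) : Prop := C.Nodup ∧ 3 ≤ C.length

/-- The value of `f` on a cycle, via the standard triangulation
`f(C) = ∑_{i=1}^{k-2} f(v₀, vᵢ, vᵢ₊₁)`. -/
def cycleVal (f : V → V → V → ℤ) : List V → ℤ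
  | [] => 0
  | v :: rest => ∑ i ∈ Finset.range (rest.length - 1),
      f v (rest.getD i v) (rest.getD (i + 1) v)

/-- `f` is weak: `|f(C)| ≤ 1` for every cycle `C`. -/
def IsWeak (f : V → V → V → ℤ) : Prop :=
  ∀ C : List V, IsCycle C → |cycleVal f C| ≤ 1

/-- `f` is nontrivial: `f(C) ≠ 0` for some cycle `C`. -/
def IsNontrivial (f : V → V → V → ℤ) : Prop :=
  ∃ C : List V, IsCycle C ∧ cycleVal f C ≠ 0

noncomputable def starEdge (O I : Set V) (x y : V) : ℤ :=
  (if x ∈ O ∧ y ∈ I then 1 else 0) - (if x ∈ I ∧ y ∈ O then 1 else 0)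

/-- The star function `pOI`: the alternating function with value `1` on `(p,q,r)`
for `q ∈ O`, `r ∈ I`, and value `0` on triples not of this form up to reorientation. -/
noncomputable def starFun (p : V) (O I : Set V) (a b c : V) : ℤ :=
  (if a = p then starEdge O I b c else 0)
    - (if b = p then starEdge O I a c else 0)
    + (if c = p then starEdge O I a b else 0)

/-- `({p}, O, I)` is an ordered partition of `V` into three nonempty parts. -/
def IsStarPartition (p : V) (O I : Set V) : Prop :=
  O.Nonempty ∧ I.Nonempty ∧ p ∉ O ∧ p ∉ I ∧ Disjoint O I ∧
    insert p (O ∪ I) = (Set.univ : Set V)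

/-- A bilinking form between `V` and `W`. -/
def IsBilinking (lam : V → V → V → W → W → W → ℤ) : Prop :=
  (∀ u v w, IsLinkingFun (fun a b c => lam a b c u v w)) ∧
  (∀ a b c, IsLinkingFun (lam a b c))

/-- The value of a bilinking form on a pair of cycles. -/
def biCycleVal (lam : V → V → V → W → W → W → ℤ) (C : List V) (D : List W) : ℤ :=
  cycleVal (fun a b c => cycleVal (lam a b c) D) C

/-- `K_V` and `K_W` are weakly linked under `lam`. -/
def WeaklyLinked (lam : V → V → V → W → W → W → ℤ) : Prop :=
  (∀ (C : List V) (D : List W), IsCycle C → IsCycle D → |biCycleVal lam C D| ≤ 1) ∧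
  ∃ (C : List V) (D : List W), IsCycle C ∧ IsCycle D ∧ biCycleVal lam C D ≠ 0

end Defs

/-- The relation `x ∼ y` on `V − {p}`: `x = y`, or the triangle `(p,x,y)` has
`λ`-value `0` against every cycle of `W`. -/
def simRel {V : Type*} {W : Type*} (lam : V → V → V → W → W → W → ℤ)
    (p x y : V) : Prop :=
  x = y ∨ (x ≠ y ∧ ∀ D : List W, IsCycle D → cycleVal (lam p x y) D = 0)

/-- Three subsets forming a partition of `W − {q}`. -/
def PartitionsThree {W : Type*} (q : W) (A B C : Set W) : Prop :=
  Disjoint A B ∧ Disjoint A C ∧ Disjoint B C ∧ A ∪ B ∪ C = ({q} : Set W)ᶜ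

set_option maxHeartbeats 2000000 in
/-- if `ε(x,y,z) = ε(x,z,w) = 1`, then the four out-sets partition
`W − {q}`, and `ε(y,z,w) = ε(y,w,x) = 1`.  Here `O_{ba} = I_{ab} = (insert q O_{ab})ᶜ`. -/
theorem cyclic_on_quadruples {V : Type*} {W : Type*} [Fintype V] [Fintype W]
    (hV : 5 ≤ Fintype.card V)
    (lam : V → V → V → W → W → W → ℤ)
    (hbl : IsBilinking lam) (hwl : WeaklyLinked lam)
    (p : V) (q : W)
    (hp : ∀ a b c : V, p ∉ ({a, b, c} : Set V) →
        ∀ D : List W, IsCycle D → cycleVal (lam a b c) D = 0)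
    (hq : ∀ u v w : W, q ∉ ({u, v, w} : Set W) →
        ∀ C : List V, IsCycle C →
          cycleVal (fun a b c => lam a b c u v w) C = 0)
    (x y z w : V) (hx : x ≠ p) (hy : y ≠ p) (hz : z ≠ p) (hw : w ≠ p)
    -- x, y, z, w lie in four distinct ∼-classes
    (hxy : ¬ simRel lam p x y) (hxz : ¬ simRel lam p x z) (hxw : ¬ simRel lam p x w)
    (hyz : ¬ simRel lam p y z) (hyw : ¬ simRel lam p y w) (hzw : ¬ simRel lam p z w)
    -- the out-sets of the six pairs
    (Oxy Oyz Ozw Owx Oxz Oyw : Set W)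
    (hOxy : lam p x y = starFun q Oxy ((insert q Oxy)ᶜ))
    (hOyz : lam p y z = starFun q Oyz ((insert q Oyz)ᶜ))
    (hOzw : lam p z w = starFun q Ozw ((insert q Ozw)ᶜ))
    (hOwx : lam p w x = starFun q Owx ((insert q Owx)ᶜ))
    (hOxz : lam p x z = starFun q Oxz ((insert q Oxz)ᶜ))
    (hOyw : lam p y w = starFun q Oyw ((insert q Oyw)ᶜ))
    (hPxy : IsStarPartition q Oxy ((insert q Oxy)ᶜ))
    (hPyz : IsStarPartition q Oyz ((insert q Oyz)ᶜ))
    (hPzw : IsStarPartition q Ozw ((insert q Ozw)ᶜ))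
    (hPwx : IsStarPartition q Owx ((insert q Owx)ᶜ))
    (hPxz : IsStarPartition q Oxz ((insert q Oxz)ᶜ))
    (hPyw : IsStarPartition q Oyw ((insert q Oyw)ᶜ))
    -- ε(x,y,z) = 1 : {O_{xy}, O_{yz}, O_{zx}} partitions W − {q}
    (heps_xyz : PartitionsThree q Oxy Oyz ((insert q Oxz)ᶜ))
    -- ε(x,z,w) = 1 : {O_{xz}, O_{zw}, O_{wx}} partitions W − {q}
    (heps_xzw : PartitionsThree q Oxz Ozw Owx) :
    -- {O_{xy}, O_{yz}, O_{zw}, O_{wx}} is a partition of W − {q}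
    (Disjoint Oxy Oyz ∧ Disjoint Oxy Ozw ∧ Disjoint Oxy Owx ∧
      Disjoint Oyz Ozw ∧ Disjoint Oyz Owx ∧ Disjoint Ozw Owx ∧
      Oxy ∪ Oyz ∪ Ozw ∪ Owx = ({q} : Set W)ᶜ) ∧
    -- ε(y,z,w) = 1 : {O_{yz}, O_{zw}, O_{wy}} partitions W − {q}
    PartitionsThree q Oyz Ozw ((insert q Oyw)ᶜ) ∧
    -- ε(y,w,x) = 1 : {O_{yw}, O_{wx}, O_{xy}} partitions W − {q}
    PartitionsThree q Oyw Owx Oxy := by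
  classical
  have hqxy : q ∉ Oxy := hPxy.2.2.1
  have hqyz : q ∉ Oyz := hPyz.2.2.1
  have hqzw : q ∉ Ozw := hPzw.2.2.1
  have hqwx : q ∉ Owx := hPwx.2.2.1
  have hqxz : q ∉ Oxz := hPxz.2.2.1
  have hqyw : q ∉ Oyw := hPyw.2.2.1
  obtain ⟨dA, dB, dC, huA⟩ := heps_xyz
  obtain ⟨dD, dE, dF, huB⟩ := heps_xzw
  -- Step 1: Oxz = Oxy ∪ Oyz
  have hOxz_eq : Oxz = Oxy ∪ Oyz := by
    ext t
    have h1 : t ∈ Oxy → t ∈ (insert q Oxz)ᶜ → False := fun a b => Set.disjoint_left.mp dB a b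
    have h2 : t ∈ Oyz → t ∈ (insert q Oxz)ᶜ → False := fun a b => Set.disjoint_left.mp dC a b
    have h3 := Set.ext_iff.mp huA t
    have e1 : t ∈ Oxy → t ≠ q := fun a b => hqxy (b ▸ a)
    have e2 : t ∈ Oyz → t ≠ q := fun a b => hqyz (b ▸ a)
    have e3 : t ∈ Oxz → t ≠ q := fun a b => hqxz (b ▸ a)
    simp only [Set.mem_union, Set.mem_compl_iff, Set.mem_insert_iff, Set.mem_singleton_iff,
      not_or] at h1 h2 h3 ⊢
    tauto
  have hsub_yz : Oyz ⊆ Oxz := hOxz_eq ▸ Set.subset_union_right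
  have hsub_xy : Oxy ⊆ Oxz := hOxz_eq ▸ Set.subset_union_left
  have d_xy_zw : Disjoint Oxy Ozw := dD.mono_left hsub_xy
  have d_yz_zw : Disjoint Oyz Ozw := dD.mono_left hsub_yz
  have d_xy_wx : Disjoint Oxy Owx := dE.mono_left hsub_xy
  have d_yz_wx : Disjoint Oyz Owx := dE.mono_left hsub_yz
  have hu4 : Oxy ∪ Oyz ∪ Ozw ∪ Owx = ({q} : Set W)ᶜ := by
    rw [hOxz_eq] at huB; exact huB
  -- Step 2: the pointwise starEdge identity from the cocycle on (p,y,z,w)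
  have hstep : ∀ u v : W, u ≠ q → v ≠ q → u ≠ v →
      starEdge Oyw ((insert q Oyw)ᶜ) u v =
        starEdge Oyz ((insert q Oyz)ᶜ) u v + starEdge Ozw ((insert q Ozw)ᶜ) u v := by
    intro u v hu hv huv
    have hcyc : IsCycle [q, u, v] := by
      refine ⟨?_, by simp⟩
      simp [List.nodup_cons, Ne.symm hu, Ne.symm hv, huv]
    have hpyzw : p ∉ ({y, z, w} : Set V) := by
      simp only [Set.mem_insert_iff, Set.mem_singleton_iff, not_or]
      exact ⟨fun h => hy h.symm, fun h => hz h.symm, fun h => hw h.symm⟩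
    have h0 : lam y z w q u v = 0 := by
      have h := hp y z w hpyzw [q, u, v] hcyc
      simpa [cycleVal] using h
    have hc : lam y z w q u v - lam p z w q u v + lam p y w q u v - lam p y z q u v = 0 :=
      (hbl.1 q u v).2 p y z w
    rw [hOyw, hOyz, hOzw, h0] at hc
    simp only [starFun, if_pos rfl, if_neg hu, if_neg hv, if_true, sub_zero, add_zero] at hc
    linarith
  -- Step 3: Oyw = Oyz ∪ Ozw
  have hOyw_eq : Oyw = Oyz ∪ Ozw := by
    ext u
    constructor
    · intro huw
      by_contra hc
      simp only [Set.mem_union, not_or] at hc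
      obtain ⟨h1, h2⟩ := hc
      have hu : u ≠ q := fun h => hqyw (h ▸ huw)
      obtain ⟨v, hv1⟩ := hPyz.1
      have hv : v ≠ q := fun h => hqyz (h ▸ hv1)
      have huv : u ≠ v := fun h => h1 (h ▸ hv1)
      have hv2 : v ∉ Ozw := Set.disjoint_left.mp d_yz_zw hv1
      have key := hstep u v hu hv huv
      have e1 : starEdge Oyz ((insert q Oyz)ᶜ) u v = -1 := by
        simp [starEdge, Set.mem_compl_iff, Set.mem_insert_iff, h1, hv1, hu]
      have e2 : starEdge Ozw ((insert q Ozw)ᶜ) u v = 0 := by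
        simp [starEdge, Set.mem_compl_iff, Set.mem_insert_iff, h2, hv2]
      rw [e1, e2, starEdge] at key
      split_ifs at key with h3 h4 h5 <;>
        first
          | omega
          | exact h4.1 (Set.mem_insert_of_mem q huw)
          | exact h5.1 (Set.mem_insert_of_mem q huw)
    · intro huv0
      obtain ⟨v, hv1⟩ := hPxy.1
      have hv : v ≠ q := fun h => hqxy (h ▸ hv1)
      have hv2 : v ∉ Oyz := Set.disjoint_left.mp dA hv1
      have hv3 : v ∉ Ozw := Set.disjoint_left.mp d_xy_zw hv1
      rcases huv0 with h1 | h1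
      · have hu : u ≠ q := fun h => hqyz (h ▸ h1)
        have huv : u ≠ v := fun h => hv2 (h ▸ h1)
        have h2 : u ∉ Ozw := Set.disjoint_left.mp d_yz_zw h1
        have key := hstep u v hu hv huv
        have e1 : starEdge Oyz ((insert q Oyz)ᶜ) u v = 1 := by
          simp [starEdge, Set.mem_compl_iff, Set.mem_insert_iff, h1, hv2, hv]
        have e2 : starEdge Ozw ((insert q Ozw)ᶜ) u v = 0 := by
          simp [starEdge, Set.mem_compl_iff, Set.mem_insert_iff, h2, hv3]
        by_contra hc
        rw [e1, e2, starEdge] at key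
        split_ifs at key with h3 h4 h5 <;>
          first
            | omega
            | exact hc h3.1
      · have hu : u ≠ q := fun h => hqzw (h ▸ h1)
        have huv : u ≠ v := fun h => hv3 (h ▸ h1)
        have h2 : u ∉ Oyz := fun h => (Set.disjoint_left.mp d_yz_zw h) h1
        have key := hstep u v hu hv huv
        have e1 : starEdge Oyz ((insert q Oyz)ᶜ) u v = 0 := by
          simp [starEdge, Set.mem_compl_iff, Set.mem_insert_iff, h2, hv2]
        have e2 : starEdge Ozw ((insert q Ozw)ᶜ) u v = 1 := by
          simp [starEdge, Set.mem_compl_iff, Set.mem_insert_iff, h1, hv3, hv]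
        by_contra hc
        rw [e1, e2, starEdge] at key
        split_ifs at key with h3 h4 h5 <;>
          first
            | omega
            | exact hc h3.1
  -- Step 4: assemble
  refine ⟨⟨dA, d_xy_zw, d_xy_wx, d_yz_zw, d_yz_wx, dF, hu4⟩, ?_, ?_⟩
  · refine ⟨d_yz_zw, ?_, ?_, ?_⟩
    · exact Set.disjoint_compl_right_iff_subset.mpr
        (fun t ht => Set.mem_insert_of_mem q (hOyw_eq ▸ Set.mem_union_left _ ht))
    · exact Set.disjoint_compl_right_iff_subset.mpr
        (fun t ht => Set.mem_insert_of_mem q (hOyw_eq ▸ Set.mem_union_right _ ht))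
    · rw [← hOyw_eq]
      ext t
      have e : t ∈ Oyw → t ≠ q := fun a b => hqyw (b ▸ a)
      simp only [Set.mem_union, Set.mem_compl_iff, Set.mem_insert_iff, Set.mem_singleton_iff,
        not_or]
      tauto
  · refine ⟨?_, ?_, d_xy_wx.symm, ?_⟩
    · rw [hOyw_eq]; exact Set.disjoint_union_left.mpr ⟨d_yz_wx, dF⟩
    · rw [hOyw_eq]; exact Set.disjoint_union_left.mpr ⟨dA.symm, d_xy_zw.symm⟩
    · rw [hOyw_eq]
      rw [← hu4]
      ext t
      simp only [Set.mem_union]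
      tauto
end

section
/- Cyclic ordering of equivalence classes: in the setting below, if the relation ∼ on V′ = V − {p} has exactly ℓ equivalence classes, then there is a bijection i ↦ X_i from {0,1,…,ℓ−1} to the set of classes such that for distinct i,j,k, ε(X_i,X_j,X_k) = 1 if and only if (i,j,k) is a cyclic permutation of its strictly increasing rearrangement. -/
open scoped Classical

/-- `ε(a,b,c) = +1`: the out-sets of the stars linked by the triangles
`(p,a,b)`, `(p,b,c)`, `(p,c,a)` partition `W − {q}`. -/
def epsPos {V : Type*} {W : Type*} (lam : V → V → V → W → W → W → ℤ)
    (p : V) (q : W) (a b c : V) : Prop :=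
  ∃ A B C : Set W,
    lam p a b = starFun q A ((insert q A)ᶜ) ∧
    lam p b c = starFun q B ((insert q B)ᶜ) ∧
    lam p c a = starFun q C ((insert q C)ᶜ) ∧
    Disjoint A B ∧ Disjoint A C ∧ Disjoint B C ∧
    A ∪ B ∪ C = ({q} : Set W)ᶜ

/-!
Fix a class representative `x₀` and a point `w₀ ≠ q`. The cocycle identities, together with the
vanishing of `λ` on triangles avoiding `p` or `q`, make `λ(p,x,y;q,s,r)` the coboundary
`δ(g_x - g_y)(s,r)` of the potentials `g_x(s) = λ(p,x,x₀;q,s,w₀)`. Weak linking bounds every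
such value by `1`, so each `g_x` takes two consecutive values on `W − {q}`, and `g_x` may be
replaced by the indicator of its upper level set `T_x`. The same bound forces the `T_x` to form a
chain, strictly so for distinct classes. Since `T_{x₀} = ∅`, some point of `W − {q}` lies outside
every `T_x`, and then `ε(x,y,z) = 1` exactly when `T_x ⊋ T_y ⊋ T_z` up to rotation. Listing the
classes by decreasing `T_x` gives the cyclic ordering.
-/

section CyclicOrdering

variable {ι κ α V W : Type*}

lemma cycleVal_triple (f : α → α → α → ℤ) (a b c : α) : cycleVal f [a, b, c] = f a b c := by
  simp [cycleVal]

lemma isCycle_triple {a b c : α} (hab : a ≠ b) (hac : a ≠ c) (hbc : b ≠ c) :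
    IsCycle [a, b, c] :=
  ⟨by simp [hab, hac, hbc], by simp⟩

namespace IsAlt

variable {f g : α → α → α → ℤ}

lemma apply_self_left (hf : IsAlt f) (a c : α) : f a a c = 0 := by
  have := hf.1 a a c; omega

lemma apply_self_right (hf : IsAlt f) (a b : α) : f a b b = 0 := by
  have := hf.2 a b b; omega

lemma apply_swap_outer (hf : IsAlt f) (a b c : α) : f c b a = -f a b c := by
  rw [hf.1 b c a, hf.2 b a c, hf.1 a b c, neg_neg]

lemma apply_self_outer (hf : IsAlt f) (a b : α) : f a b a = 0 := by
  have := hf.apply_swap_outer a b a; omega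

lemma eq_zero_of_cycleVal_eq_zero (hf : IsAlt f)
    (h : ∀ C : List α, IsCycle C → cycleVal f C = 0) (a b c : α) : f a b c = 0 := by
  by_cases hab : a = b
  · rw [hab, hf.apply_self_left]
  by_cases hac : a = c
  · rw [hac, hf.apply_self_outer]
  by_cases hbc : b = c
  · rw [hbc, hf.apply_self_right]
  simpa [cycleVal_triple] using h [a, b, c] (isCycle_triple hab hac hbc)

lemma eq_of_apply_apex_eq {q : α} (hf : IsAlt f) (hg : IsAlt g)
    (hf₀ : ∀ u v w, u ≠ q → v ≠ q → w ≠ q → f u v w = 0)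
    (hg₀ : ∀ u v w, u ≠ q → v ≠ q → w ≠ q → g u v w = 0)
    (h : ∀ s t, s ≠ q → t ≠ q → f q s t = g q s t) : f = g := by
  have apex : ∀ s t, f q s t = g q s t := by
    intro s t
    by_cases hs : s = q
    · rw [hs, hf.apply_self_left, hg.apply_self_left]
    by_cases ht : t = q
    · rw [ht, hf.apply_self_outer, hg.apply_self_outer]
    exact h s t hs ht
  funext u v w
  by_cases hu : u = q
  · rw [hu, apex]
  by_cases hv : v = q
  · rw [hv, hf.1 q u w, hg.1 q u w, apex]
  by_cases hw : w = q
  · rw [hw, hf.apply_swap_outer q v u, hg.apply_swap_outer q v u, apex]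
  rw [hf₀ u v w hu hv hw, hg₀ u v w hu hv hw]

end IsAlt

section Star

lemma isAlt_starFun (q : α) (O I : Set α) : IsAlt (starFun q O I) := by
  have antisymm : ∀ x y, starEdge O I y x = -starEdge O I x y := by
    intro x y
    simp only [starEdge, and_comm (a := y ∈ O), and_comm (a := y ∈ I)]
    ring
  constructor <;> intro a b c <;> simp only [starFun]
  · rw [antisymm a b]; split_ifs <;> ring
  · rw [antisymm b c]; split_ifs <;> ring

lemma starFun_eq_zero (q : α) (O I : Set α) {u v w : α} (hu : u ≠ q) (hv : v ≠ q)
    (hw : w ≠ q) : starFun q O I u v w = 0 := by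
  simp [starFun, hu, hv, hw]

lemma starFun_apex (q : α) (A : Set α) {s t : α} (hs : s ≠ q) (ht : t ≠ q) :
    starFun q A (insert q A)ᶜ q s t = A.indicator 1 s - A.indicator 1 t := by
  by_cases hsA : s ∈ A <;> by_cases htA : t ∈ A <;>
    simp [starFun, starEdge, hs, ht, hsA, htA]

end Star

lemma epsPos.rotate {lam : V → V → V → W → W → W → ℤ} {p : V} {q : W} {a b c : V}
    (h : epsPos lam p q a b c) : epsPos lam p q b c a := by
  obtain ⟨A, B, C, hA, hB, hC, hAB, hAC, hBC, hU⟩ := h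
  refine ⟨B, C, A, hB, hC, hA, hBC, hAB.symm, hAC.symm, ?_⟩
  rw [← hU, Set.union_comm _ A, Set.union_assoc]

section LevelSet

def upperLevel (S : Set α) (g : α → ℤ) : Set α := {s | s ∈ S ∧ ∃ r ∈ S, g r < g s}

lemma upperLevel_subset (S : Set α) (g : α → ℤ) : upperLevel S g ⊆ S := fun _ hs => hs.1

lemma sub_eq_indicator_upperLevel_sub {S : Set α} {g : α → ℤ}
    (hg : ∀ s ∈ S, ∀ r ∈ S, |g s - g r| ≤ 1) {s r : α} (hs : s ∈ S) (hr : r ∈ S) :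
    g s - g r = (upperLevel S g).indicator 1 s - (upperLevel S g).indicator 1 r := by
  have le : ∀ a ∈ S, ∀ b ∈ S, g a ≤ g b + 1 := fun a ha b hb => by
    have := (abs_le.1 (hg a ha b hb)).2; omega
  have hsr := le s hs r hr
  have hrs := le r hr s hs
  simp only [Set.indicator_apply, upperLevel, Set.mem_ofPred_eq, hs, hr, true_and, Pi.one_apply]
  by_cases hs' : ∃ s' ∈ S, g s' < g s <;> by_cases hr' : ∃ r' ∈ S, g r' < g r <;>
    simp only [hs', hr', if_true, if_false]
  · obtain ⟨s', hs'S, hs'⟩ := hs'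
    obtain ⟨r', hr'S, hr'⟩ := hr'
    have := le s hs r' hr'S
    have := le r hr s' hs'S
    omega
  · obtain ⟨s', hs'S, hs'⟩ := hs'
    push Not at hr'
    have := hr' s' hs'S
    omega
  · obtain ⟨r', hr'S, hr'⟩ := hr'
    push Not at hs'
    have := hs' r' hr'S
    omega
  · push Not at hs' hr'
    have := hs' r hr
    have := hr' s hs
    omega

end LevelSet

lemma cyclic_or_anticyclic [LinearOrder α] {i j k : α} (hij : i ≠ j) (hik : i ≠ k)
    (hjk : j ≠ k) :
    ((i < j ∧ j < k) ∨ (j < k ∧ k < i) ∨ (k < i ∧ i < j)) ∨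
      ((k < j ∧ j < i) ∨ (j < i ∧ i < k) ∨ (i < k ∧ k < j)) := by
  rcases hij.lt_or_gt with h₁ | h₁ <;> rcases hjk.lt_or_gt with h₂ | h₂ <;>
    rcases hik.lt_or_gt with h₃ | h₃
  all_goals tauto

lemma Fin.exists_perm_strictMono [PartialOrder α] {n : ℕ} (f : Fin n → α)
    (hf : Pairwise fun i j => f i < f j ∨ f j < f i) :
    ∃ σ : Equiv.Perm (Fin n), StrictMono (f ∘ σ) := by
  -- Sort by the number of smaller members.
  let rank : Fin n → ℕ := fun i => (Finset.univ.filter fun j => f j < f i).card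
  have rank_lt : ∀ {i j}, f i < f j → rank i < rank j := fun {i j} hij =>
    Finset.card_lt_card <| Finset.ssubset_iff_of_subset
      (fun k hk => by simp only [Finset.mem_filter_univ] at hk ⊢; exact hk.trans hij) |>.2
      ⟨i, by simpa using hij, by simp⟩
  have lt_of_rank_lt : ∀ {i j}, rank i < rank j → f i < f j := by
    intro i j hr
    have hij : i ≠ j := by rintro rfl; exact hr.false
    exact (hf hij).resolve_right fun hji => (rank_lt hji).not_gt hr
  have rank_inj : Function.Injective rank := by
    intro i j hr
    by_contra hij
    rcases hf hij with h | h
    · exact (rank_lt h).ne hr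
    · exact (rank_lt h).ne hr.symm
  refine ⟨Tuple.sort rank, fun a b hab => lt_of_rank_lt ?_⟩
  exact (Tuple.monotone_sort rank).strictMono_of_injective
    (rank_inj.comp (Tuple.sort rank).injective) hab

structure CentredBilinking (lam : V → V → V → W → W → W → ℤ) (p : V) (q : W) : Prop where
  isBilinking : IsBilinking lam
  abs_biCycleVal_le :
    ∀ (C : List V) (D : List W), IsCycle C → IsCycle D → |biCycleVal lam C D| ≤ 1
  cycleVal_eq_zero_of_p_notMem : ∀ a b c : V, p ∉ ({a, b, c} : Set V) →
    ∀ D : List W, IsCycle D → cycleVal (lam a b c) D = 0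
  cycleVal_eq_zero_of_q_notMem : ∀ u v w : W, q ∉ ({u, v, w} : Set W) →
    ∀ C : List V, IsCycle C → cycleVal (fun a b c => lam a b c u v w) C = 0

def IsIndicatorPotential (lam : V → V → V → W → W → W → ℤ) (p : V) (q : W) (x : ι → V)
    (T : ι → Set W) : Prop :=
  ∀ i j s r, s ≠ q → r ≠ q → lam p (x i) (x j) q s r =
    ((T i).indicator 1 s - (T j).indicator 1 s) - ((T i).indicator 1 r - (T j).indicator 1 r)

namespace CentredBilinking

variable {lam : V → V → V → W → W → W → ℤ} {p : V} {q : W}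

lemma apply_eq_zero_of_ne_p (h : CentredBilinking lam p q) {a b c : V} (ha : a ≠ p)
    (hb : b ≠ p) (hc : c ≠ p) (u v w : W) : lam a b c u v w = 0 :=
  (h.isBilinking.2 a b c).1.eq_zero_of_cycleVal_eq_zero
    (h.cycleVal_eq_zero_of_p_notMem a b c (by simp [ha.symm, hb.symm, hc.symm])) u v w

lemma apply_eq_zero_of_ne_q (h : CentredBilinking lam p q) {u v w : W} (hu : u ≠ q)
    (hv : v ≠ q) (hw : w ≠ q) (a b c : V) : lam a b c u v w = 0 :=
  (h.isBilinking.1 u v w).1.eq_zero_of_cycleVal_eq_zero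
    (h.cycleVal_eq_zero_of_q_notMem u v w (by simp [hu.symm, hv.symm, hw.symm])) a b c

lemma apply_apex_self (h : CentredBilinking lam p q) (x : V) (s t : W) : lam p x x q s t = 0 :=
  (h.isBilinking.1 q s t).1.apply_self_right p x

lemma apply_apex_add_left (h : CentredBilinking lam p q) {x y z : V} (hx : x ≠ p)
    (hy : y ≠ p) (hz : z ≠ p) (s t : W) :
    lam p x z q s t = lam p x y q s t + lam p y z q s t := by
  have hcoc := (h.isBilinking.1 q s t).2 p x y z
  have := h.apply_eq_zero_of_ne_p hx hy hz q s t
  simp only at hcoc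
  omega

lemma apply_apex_add_right (h : CentredBilinking lam p q) (x y : V) {s t u : W}
    (hs : s ≠ q) (ht : t ≠ q) (hu : u ≠ q) :
    lam p x y q s u = lam p x y q s t + lam p x y q t u := by
  have hcoc := (h.isBilinking.2 p x y).2 q s t u
  have := h.apply_eq_zero_of_ne_q hs ht hu p x y
  omega

lemma abs_apply_apex_le_one (h : CentredBilinking lam p q) {x y : V} {s t : W} (hx : x ≠ p)
    (hy : y ≠ p) (hxy : x ≠ y) (hs : s ≠ q) (ht : t ≠ q) (hst : s ≠ t) :
    |lam p x y q s t| ≤ 1 := by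
  simpa [biCycleVal, cycleVal_triple] using h.abs_biCycleVal_le [p, x, y] [q, s, t]
    (isCycle_triple hx.symm hy.symm hxy) (isCycle_triple hs.symm ht.symm hst)

lemma apply_apex_eq_potential_sub (h : CentredBilinking lam p q) {x y z : V} (hx : x ≠ p)
    (hy : y ≠ p) (hz : z ≠ p) {s r w : W} (hs : s ≠ q) (hr : r ≠ q) (hw : w ≠ q) :
    lam p x y q s r =
      (lam p x z q s w - lam p x z q r w) - (lam p y z q s w - lam p y z q r w) := by
  have hxzy := h.apply_apex_add_left hx hz hy s r
  have hzy := (h.isBilinking.1 q s r).1.2 p y z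
  have hxz := h.apply_apex_add_right x z hs hw hr
  have hyz := h.apply_apex_add_right y z hs hw hr
  have hxz' := (h.isBilinking.2 p x z).1.2 q r w
  have hyz' := (h.isBilinking.2 p y z).1.2 q r w
  simp only at hzy
  omega

lemma eq_starFun_of_apply_apex (h : CentredBilinking lam p q) (x y : V) (A : Set W)
    (hA : ∀ s t, s ≠ q → t ≠ q → lam p x y q s t = A.indicator 1 s - A.indicator 1 t) :
    lam p x y = starFun q A (insert q A)ᶜ :=
  (h.isBilinking.2 p x y).1.eq_of_apply_apex_eq (isAlt_starFun q A _)
    (fun _ _ _ hu hv hw => h.apply_eq_zero_of_ne_q hu hv hw p x y)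
    (fun _ _ _ hu hv hw => starFun_eq_zero q A _ hu hv hw)
    (fun s t hs ht => by rw [hA s t hs ht, starFun_apex q A hs ht])

lemma exists_apply_apex_ne_zero (h : CentredBilinking lam p q) {x y : V}
    (hxy : ¬simRel lam p x y) : ∃ s r, s ≠ q ∧ r ≠ q ∧ lam p x y q s r ≠ 0 := by
  by_contra! hzero
  have hlam : lam p x y = fun _ _ _ => 0 :=
    (h.isBilinking.2 p x y).1.eq_of_apply_apex_eq ⟨by simp, by simp⟩
      (fun _ _ _ hu hv hw => h.apply_eq_zero_of_ne_q hu hv hw p x y) (fun _ _ _ _ _ _ => rfl)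
      hzero
  refine hxy (Or.inr ⟨fun he => hxy (Or.inl he), fun D _ => ?_⟩)
  cases D <;> simp [cycleVal, hlam]

lemma exists_isIndicatorPotential (h : CentredBilinking lam p q) {x : ι → V}
    (hx : ∀ i, x i ≠ p) (i₀ : ι) {w₀ : W} (hw₀ : w₀ ≠ q) :
    ∃ T : ι → Set W, IsIndicatorPotential lam p q x T ∧ (∀ i, q ∉ T i) ∧ T i₀ = ∅ := by
  obtain ⟨g, hg⟩ : ∃ g : ι → W → ℤ, ∀ i s, g i s = lam p (x i) (x i₀) q s w₀ :=
    ⟨_, fun _ _ => rfl⟩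
  have osc : ∀ i, ∀ s ∈ ({q}ᶜ : Set W), ∀ r ∈ ({q}ᶜ : Set W), |g i s - g i r| ≤ 1 := by
    intro i s hs r hr
    have e := h.apply_apex_eq_potential_sub (hx i) (hx i₀) (hx i₀) hs hr hw₀
    simp only [h.apply_apex_self, sub_zero] at e
    rw [hg, hg, ← e]
    by_cases hi : x i = x i₀
    · simp [hi, h.apply_apex_self]
    by_cases hsr : s = r
    · simp [hsr, (h.isBilinking.2 p (x i) (x i₀)).1.apply_self_right]
    exact h.abs_apply_apex_le_one (hx i) (hx i₀) hi hs hr hsr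
  refine ⟨fun i => upperLevel {q}ᶜ (g i), fun i j s r hs hr => ?_,
    fun i hq => upperLevel_subset _ _ hq rfl, ?_⟩
  · have hi := sub_eq_indicator_upperLevel_sub (osc i) hs hr
    have hj := sub_eq_indicator_upperLevel_sub (osc j) hs hr
    rw [h.apply_apex_eq_potential_sub (hx i) (hx j) (hx i₀) hs hr hw₀, ← hg, ← hg, ← hg, ← hg]
    linear_combination hi - hj
  · ext s
    simp [upperLevel, hg, h.apply_apex_self]

end CentredBilinking

namespace IsIndicatorPotential

variable {lam : V → V → V → W → W → W → ℤ} {p : V} {q : W} {x : ι → V} {T : ι → Set W}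

lemma comp (hT : IsIndicatorPotential lam p q x T) (f : κ → ι) :
    IsIndicatorPotential lam p q (x ∘ f) (T ∘ f) :=
  fun i j => hT (f i) (f j)

lemma ssubset_or_ssubset (hT : IsIndicatorPotential lam p q x T)
    (h : CentredBilinking lam p q) {i j : ι} (hxi : x i ≠ p) (hxj : x j ≠ p) (hqi : q ∉ T i)
    (hqj : q ∉ T j) (hij : ¬simRel lam p (x i) (x j)) : T i ⊂ T j ∨ T j ⊂ T i := by
  have hne : T i ≠ T j := by
    intro he
    obtain ⟨s, r, hs, hr, hsr⟩ := h.exists_apply_apex_ne_zero hij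
    exact hsr (by rw [hT i j s r hs hr, he]; ring)
  have chain : T i ⊆ T j ∨ T j ⊆ T i := by
    by_contra! hc
    obtain ⟨s, hsi, hsj⟩ := Set.not_subset.1 hc.1
    obtain ⟨r, hrj, hri⟩ := Set.not_subset.1 hc.2
    have hs : s ≠ q := fun e => hqi (e ▸ hsi)
    have hr : r ≠ q := fun e => hqj (e ▸ hrj)
    have hb := h.abs_apply_apex_le_one hxi hxj (fun e => hij (Or.inl e)) hs hr
      (fun e => hsj (e ▸ hrj))
    rw [hT i j s r hs hr] at hb
    simp [hsi, hsj, hri, hrj] at hb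
  exact chain.imp (·.ssubset_of_ne hne) (·.ssubset_of_ne hne.symm)

lemma exists_notMem (hT : IsIndicatorPotential lam p q x T) (h : CentredBilinking lam p q)
    {i j : ι} (hj : T j = ∅) (hij : ¬simRel lam p (x i) (x j)) : ∃ r, r ≠ q ∧ r ∉ T i := by
  obtain ⟨s, r, hs, hr, hsr⟩ := h.exists_apply_apex_ne_zero hij
  by_contra! hall
  rw [hT i j s r hs hr, hj] at hsr
  simp [hall s hs, hall r hr] at hsr

lemma mem_of_eq_starFun (hT : IsIndicatorPotential lam p q x T) {a b : ι} (hab : T a ⊂ T b)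
    (hqb : q ∉ T b) {A : Set W} (hA : lam p (x a) (x b) = starFun q A (insert q A)ᶜ) {r : W}
    (hrq : r ≠ q) (hrb : r ∉ T b) : r ∈ A := by
  obtain ⟨s, hsb, hsa⟩ := Set.exists_of_ssubset hab
  have hsq : s ≠ q := fun e => hqb (e ▸ hsb)
  have e := congrFun (congrFun (congrFun hA q) s) r
  rw [hT a b s r hsq hrq, starFun_apex q A hsq hrq] at e
  have hra : r ∉ T a := fun hr => hrb (hab.subset hr)
  by_cases hsA : s ∈ A <;> by_cases hrA : r ∈ A <;> simp [hsb, hsa, hrb, hra, hsA, hrA] at e ⊢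

lemma epsPos_of_subset (hT : IsIndicatorPotential lam p q x T) (h : CentredBilinking lam p q)
    {i j k : ι} (hkj : T k ⊆ T j) (hji : T j ⊆ T i) (hqi : q ∉ T i) :
    epsPos lam p q (x i) (x j) (x k) := by
  have hki := hkj.trans hji
  have hcompl : T i \ T k ⊆ {q}ᶜ := fun s hs e => hqi (e ▸ hs.1)
  have ind_one : ∀ s, s ≠ q → ({q}ᶜ : Set W).indicator (1 : W → ℤ) s = 1 :=
    fun s hs => Set.indicator_of_mem hs 1
  refine ⟨T i \ T j, T j \ T k, {q}ᶜ \ (T i \ T k), ?_, ?_, ?_, ?_, ?_, ?_, ?_⟩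
  · refine h.eq_starFun_of_apply_apex _ _ _ fun s t hs ht => ?_
    rw [hT i j s t hs ht, Set.indicator_sdiff hji]
    rfl
  · refine h.eq_starFun_of_apply_apex _ _ _ fun s t hs ht => ?_
    rw [hT j k s t hs ht, Set.indicator_sdiff hkj]
    rfl
  · refine h.eq_starFun_of_apply_apex _ _ _ fun s t hs ht => ?_
    simp only [hT k i s t hs ht, Set.indicator_sdiff hcompl, Set.indicator_sdiff hki,
      Pi.sub_apply, ind_one s hs, ind_one t ht]
    ring
  · exact Set.disjoint_sdiff_left.mono_right Set.sdiff_subset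
  · exact Set.disjoint_sdiff_right.mono_left (Set.sdiff_subset_sdiff_right hkj)
  · exact Set.disjoint_sdiff_right.mono_left (Set.sdiff_subset_sdiff_left hji)
  · rw [Set.sdiff_union_sdiff_cancel hji hkj, Set.union_sdiff_cancel hcompl]

lemma not_epsPos_of_ssubset (hT : IsIndicatorPotential lam p q x T) {i j k : ι}
    (hkj : T k ⊂ T j) (hji : T j ⊂ T i) (hqi : q ∉ T i) {r : W} (hrq : r ≠ q) (hri : r ∉ T i) :
    ¬epsPos lam p q (x k) (x j) (x i) := by
  rintro ⟨A, B, -, hA, hB, -, hAB, -⟩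
  exact Set.disjoint_left.1 hAB
    (hT.mem_of_eq_starFun hkj (fun hq => hqi (hji.subset hq)) hA hrq
      (fun hr => hri (hji.subset hr)))
    (hT.mem_of_eq_starFun hji hqi hB hrq hri)

lemma epsPos_iff_of_strictAnti [LinearOrder ι] (hT : IsIndicatorPotential lam p q x T)
    (h : CentredBilinking lam p q) (hanti : StrictAnti T) (hq : ∀ i, q ∉ T i)
    (hout : ∀ i, ∃ r, r ≠ q ∧ r ∉ T i) {i j k : ι} (hij : i ≠ j) (hik : i ≠ k) (hjk : j ≠ k) :
    epsPos lam p q (x i) (x j) (x k) ↔ (i < j ∧ j < k) ∨ (j < k ∧ k < i) ∨ (k < i ∧ i < j) := by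
  have pos : ∀ {a b c}, a < b → b < c → epsPos lam p q (x a) (x b) (x c) := fun hab hbc =>
    hT.epsPos_of_subset h (hanti.antitone hbc.le) (hanti.antitone hab.le) (hq _)
  have neg : ∀ {a b c}, a < b → b < c → ¬epsPos lam p q (x c) (x b) (x a) := by
    intro a b c hab hbc
    obtain ⟨r, hrq, hra⟩ := hout a
    exact hT.not_epsPos_of_ssubset (hanti hbc) (hanti hab) (hq a) hrq hra
  refine ⟨fun he => ?_, ?_⟩
  · rcases cyclic_or_anticyclic hij hik hjk with hcyc | ⟨h₁, h₂⟩ | ⟨h₁, h₂⟩ | ⟨h₁, h₂⟩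
    exacts [hcyc, (neg h₁ h₂ he).elim, (neg h₁ h₂ he.rotate.rotate).elim,
      (neg h₁ h₂ he.rotate).elim]
  · rintro (⟨h₁, h₂⟩ | ⟨h₁, h₂⟩ | ⟨h₁, h₂⟩)
    exacts [pos h₁ h₂, (pos h₁ h₂).rotate.rotate, (pos h₁ h₂).rotate]

end IsIndicatorPotential

end CyclicOrdering

theorem cyclic_ordering_of_classes_general {V : Type*} {W : Type*}
    (lam : V → V → V → W → W → W → ℤ)
    (hbl : IsBilinking lam) (hwl : WeaklyLinked lam)
    (p : V) (q : W)
    (hp : ∀ a b c : V, p ∉ ({a, b, c} : Set V) →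
        ∀ D : List W, IsCycle D → cycleVal (lam a b c) D = 0)
    (hq : ∀ u v w : W, q ∉ ({u, v, w} : Set W) →
        ∀ C : List V, IsCycle C →
          cycleVal (fun a b c => lam a b c u v w) C = 0)
    (ℓ : ℕ) (hl : 2 ≤ ℓ)
    -- `∼` has exactly ℓ equivalence classes on V − {p}
    (hcl : ∃ t : Fin ℓ → V, (∀ i, t i ≠ p) ∧
        (∀ i j, simRel lam p (t i) (t j) → i = j) ∧
        (∀ v : V, v ≠ p → ∃ i, simRel lam p v (t i))) :
    ∃ x : Fin ℓ → V, (∀ i, x i ≠ p) ∧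
      (∀ i j, simRel lam p (x i) (x j) → i = j) ∧
      (∀ v : V, v ≠ p → ∃ i, simRel lam p v (x i)) ∧
      ∀ i j k : Fin ℓ, i ≠ j → i ≠ k → j ≠ k →
        (epsPos lam p q (x i) (x j) (x k) ↔
          ((i < j ∧ j < k) ∨ (j < k ∧ k < i) ∨ (k < i ∧ i < j))) := by
  obtain ⟨t, ht_ne, ht_inj, ht_cover⟩ := hcl
  have h : CentredBilinking lam p q := ⟨hbl, hwl.1, hp, hq⟩
  have hdist : ∀ i j, i ≠ j → ¬simRel lam p (t i) (t j) := fun i j hij hs => hij (ht_inj i j hs)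
  let i₀ : Fin ℓ := ⟨0, by omega⟩
  obtain ⟨w₀, -, hw₀, -, -⟩ :=
    h.exists_apply_apex_ne_zero (hdist i₀ ⟨1, hl⟩ (by simp [i₀, Fin.ext_iff]))
  obtain ⟨T, hT, hqT, hT₀⟩ := h.exists_isIndicatorPotential ht_ne i₀ hw₀
  have hout : ∀ i, ∃ r, r ≠ q ∧ r ∉ T i := fun i =>
    if hi : i = i₀ then ⟨w₀, hw₀, by simp [hi, hT₀]⟩ else hT.exists_notMem h hT₀ (hdist i i₀ hi)
  obtain ⟨σ, hσ⟩ := Fin.exists_perm_strictMono (OrderDual.toDual ∘ T) fun i j hij =>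
    (hT.ssubset_or_ssubset h (ht_ne i) (ht_ne j) (hqT i) (hqT j) (hdist i j hij)).symm
  refine ⟨t ∘ σ, fun i => ht_ne _, fun i j hs => σ.injective (ht_inj _ _ hs), fun v hv => ?_,
    fun i j k => (hT.comp σ).epsPos_iff_of_strictAnti h (strictMono_toDual_comp_iff.1 hσ)
      (fun _ => hqT _) (fun _ => hout _)⟩
  obtain ⟨i, hi⟩ := ht_cover v hv
  exact ⟨σ.symm i, by simpa using hi⟩

/-- cyclic ordering of the `∼`-equivalence classes. -/
theorem cyclic_ordering_of_classes {V : Type*} {W : Type*} [Fintype V] [Fintype W]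
    (hV : 5 ≤ Fintype.card V)
    (lam : V → V → V → W → W → W → ℤ)
    (hbl : IsBilinking lam) (hwl : WeaklyLinked lam)
    (p : V) (q : W)
    (hp : ∀ a b c : V, p ∉ ({a, b, c} : Set V) →
        ∀ D : List W, IsCycle D → cycleVal (lam a b c) D = 0)
    (hq : ∀ u v w : W, q ∉ ({u, v, w} : Set W) →
        ∀ C : List V, IsCycle C →
          cycleVal (fun a b c => lam a b c u v w) C = 0)
    (ℓ : ℕ) (hl : 2 ≤ ℓ)
    -- `∼` has exactly ℓ equivalence classes on V − {p}
    (hcl : ∃ t : Fin ℓ → V, (∀ i, t i ≠ p) ∧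
        (∀ i j, simRel lam p (t i) (t j) → i = j) ∧
        (∀ v : V, v ≠ p → ∃ i, simRel lam p v (t i))) :
    ∃ x : Fin ℓ → V, (∀ i, x i ≠ p) ∧
      (∀ i j, simRel lam p (x i) (x j) → i = j) ∧
      (∀ v : V, v ≠ p → ∃ i, simRel lam p v (x i)) ∧
      ∀ i j k : Fin ℓ, i ≠ j → i ≠ k → j ≠ k →
        (epsPos lam p q (x i) (x j) (x k) ↔
          ((i < j ∧ j < k) ∨ (j < k ∧ k < i) ∨ (k < i ∧ i < j))) :=
  cyclic_ordering_of_classes_general lam hbl hwl p q hp hq ℓ hl hcl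
end

section
/- If there is a vertex q of W common to all triangles of W linking V (i.e., λ((u,v,w),C) = 0 for all cycles C in V whenever q ∉ {u,v,w}), and every triangle T of W that links V links it in a star (i.e., S ↦ λ(S,T) is a star function on V), then K_V and K_W are not strongly linked: |λ(C,D)| ≤ 1 for every cycle C in V and every cycle D in W. -/
open scoped Classical

section Aux

variable {X : Type*}


variable {X : Type*}

lemma alt_aab {f : X → X → X → ℤ} (h : IsAlt f) (a c : X) : f a a c = 0 := by
  have := h.1 a a c; omega

lemma alt_abb {f : X → X → X → ℤ} (h : IsAlt f) (a b : X) : f a b b = 0 := by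
  have := h.2 a b b; omega

lemma alt_aba {f : X → X → X → ℤ} (h : IsAlt f) (a b : X) : f a b a = 0 := by
  have h1 := h.2 a b a
  have h2 := alt_aab h a b
  omega

lemma cycleVal_zero (C : List X) : cycleVal (fun _ _ _ => (0:ℤ)) C = 0 := by
  cases C <;> simp [cycleVal]

lemma key (f : X → X → X → ℤ) (halt : IsAlt f) (hco : IsCocycle f) (p : X)
    (hsup : ∀ x y z, x ≠ p → y ≠ p → z ≠ p → f x y z = 0)
    (hbd : ∀ x y z, |f x y z| ≤ 1) :
    ∀ D : List X, IsCycle D → |cycleVal f D| ≤ 1 := by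
  rintro (_ | ⟨d, rest⟩) ⟨hnd, hlen⟩
  · simp at hlen
  have hdrest : d ∉ rest := (List.nodup_cons.mp hnd).1
  have hrest : rest.Nodup := (List.nodup_cons.mp hnd).2
  have hlen2 : 2 ≤ rest.length := by simpa using hlen
  set g : X → X → ℤ := fun x y => f p x y with hg
  have gpy : ∀ y, g p y = 0 := fun y => alt_aab halt p y
  have gyp : ∀ y, g y p = 0 := fun y => alt_aba halt p y
  have gxx : ∀ x, g x x = 0 := fun x => alt_abb halt p x
  have gsym : ∀ x y, g y x = - g x y := fun x y => halt.2 p x y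
  have gbd : ∀ x y, |g x y| ≤ 1 := fun x y => hbd p x y
  have gadd : ∀ x y z, x ≠ p → y ≠ p → z ≠ p → g x y + g y z = g x z := by
    intro x y z hx hy hz
    have h4 := hco p x y z
    have h0 := hsup x y z hx hy hz
    simp only [hg]
    linarith
  set n := rest.length - 1 with hn
  have hn1 : 1 ≤ n := by omega
  have hln : rest.length = n + 1 := by omega
  set r : ℕ → X := fun i => rest.getD i d with hr
  have hrmem : ∀ i, i ≤ n → r i ∈ rest := by
    intro i hi
    have h : i < rest.length := by omega
    rw [hr]
    simp only [List.getD_eq_getElem rest d h]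
    exact List.getElem_mem h
  have hinj : ∀ i j, i ≤ n → j ≤ n → r i = r j → i = j := by
    intro i j hi hj hij
    have hi' : i < rest.length := by omega
    have hj' : j < rest.length := by omega
    rw [hr] at hij
    simp only [List.getD_eq_getElem rest d hi', List.getD_eq_getElem rest d hj'] at hij
    exact (List.Nodup.getElem_inj_iff hrest).mp hij
  have hcv : cycleVal f (d :: rest) =
      (∑ i ∈ Finset.range n, g (r i) (r (i+1))) + g d (r 0) - g d (r n) := by
    have hfd : ∀ x y, f d x y = g x y + (g d x - g d y) := by
      intro x y
      have h4 := hco p d x y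
      simp only [hg]
      linarith
    show (∑ i ∈ Finset.range (rest.length - 1),
        f d (rest.getD i d) (rest.getD (i+1) d)) = _
    rw [← hn]
    calc ∑ i ∈ Finset.range n, f d (rest.getD i d) (rest.getD (i+1) d)
        = ∑ i ∈ Finset.range n, (g (r i) (r (i+1)) + (g d (r i) - g d (r (i+1)))) := by
          exact Finset.sum_congr rfl fun i _ => hfd _ _
      _ = (∑ i ∈ Finset.range n, g (r i) (r (i+1)))
            + ∑ i ∈ Finset.range n, (g d (r i) - g d (r (i+1))) := Finset.sum_add_distrib
      _ = _ := by rw [Finset.sum_range_sub' (fun i => g d (r i)) n]; ring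
  have tel : ∀ k m, (∀ i, m ≤ i → i ≤ m + k → r i ≠ p) →
      ∑ i ∈ Finset.Ico m (m+k), g (r i) (r (i+1)) = g (r m) (r (m+k)) := by
    intro k
    induction k with
    | zero => intro m _; simp [gxx]
    | succ k ih =>
      intro m hne
      rw [show m + (k+1) = (m+k) + 1 from rfl,
        Finset.sum_Ico_succ_top (by omega : m ≤ m + k)]
      rw [ih m (fun i h1 h2 => hne i h1 (by omega))]
      exact gadd _ _ _ (hne m le_rfl (by omega)) (hne (m+k) (by omega) (by omega))
        (hne (m+k+1) (by omega) (by omega))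
  rw [hcv, Finset.range_eq_Ico]
  by_cases hdp : d = p
  · have hrp : ∀ i, i ≤ n → r i ≠ p := by
      intro i hi hip
      exact hdrest (by rw [hdp, ← hip]; exact hrmem i hi)
    have t := tel n 0 (fun i h1 h2 => hrp i (by omega))
    simp only [Nat.zero_add] at t
    rw [t, hdp, gpy, gpy]
    simpa [hg] using gbd (r 0) (r n)
  · by_cases hpm : p ∈ rest
    · obtain ⟨j, hj', hjp⟩ := List.mem_iff_getElem.mp hpm
      have hj : j ≤ n := by omega
      have hrj : r j = p := by
        rw [hr]; simp only [List.getD_eq_getElem rest d hj']; exact hjp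
      have hrne : ∀ i, i ≤ n → i ≠ j → r i ≠ p := by
        intro i hi hij hip
        exact hij (hinj i j hi hj (by rw [hip, hrj]))
      rcases Nat.eq_zero_or_pos j with hj0 | hjpos
      · -- j = 0
        subst hj0
        have t := tel (n-1) 1 (fun i h1 h2 => hrne i (by omega) (by omega))
        rw [show 1 + (n-1) = n from by omega] at t
        rw [Finset.sum_eq_sum_Ico_succ_bot (by omega : 0 < n), t, hrj, gpy, gyp]
        have e1 : g (r 1) (r n) + g (r n) d = g (r 1) d :=
          gadd _ _ _ (hrne 1 (by omega) (by omega)) (hrne n (by omega) (by omega)) hdp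
        have e2 := gsym d (r n)
        have : (0 : ℤ) + g (r 1) (r n) + 0 - g d (r n) = g (r 1) d := by linarith
        rw [this]
        exact gbd (r 1) d
      · by_cases hjn : j = n
        · -- j = n
          subst hjn
          have t := tel (n-1) 0 (fun i h1 h2 => hrne i (by omega) (by omega))
          simp only [Nat.zero_add] at t
          rw [show Finset.Ico 0 n = Finset.Ico 0 ((n-1)+1) from by rw [show (n-1)+1 = n from by omega],
            Finset.sum_Ico_succ_top (by omega : 0 ≤ n - 1), t,
            show (n-1)+1 = n from by omega, hrj, gyp, gyp]
          have e1 : g d (r 0) + g (r 0) (r (n-1)) = g d (r (n-1)) :=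
            gadd _ _ _ hdp (hrne 0 (by omega) (by omega)) (hrne (n-1) (by omega) (by omega))
          have : g (r 0) (r (n-1)) + 0 + g d (r 0) - 0 = g d (r (n-1)) := by linarith
          rw [this]
          exact gbd d (r (n-1))
        · -- 0 < j < n
          have hjn' : j < n := lt_of_le_of_ne hj hjn
          have s1 : ∑ i ∈ Finset.Ico 0 n, g (r i) (r (i+1)) =
              (∑ i ∈ Finset.Ico 0 (j+1), g (r i) (r (i+1)))
                + ∑ i ∈ Finset.Ico (j+1) n, g (r i) (r (i+1)) :=
            (Finset.sum_Ico_consecutive _ (by omega) (by omega)).symm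
          have s2 : ∑ i ∈ Finset.Ico 0 (j+1), g (r i) (r (i+1)) =
              (∑ i ∈ Finset.Ico 0 j, g (r i) (r (i+1))) + g (r j) (r (j+1)) :=
            Finset.sum_Ico_succ_top (by omega) _
          have s3 : ∑ i ∈ Finset.Ico 0 j, g (r i) (r (i+1)) =
              (∑ i ∈ Finset.Ico 0 (j-1), g (r i) (r (i+1))) + g (r (j-1)) (r j) := by
            rw [show Finset.Ico 0 j = Finset.Ico 0 ((j-1)+1) from by rw [show (j-1)+1 = j from by omega]]
            rw [Finset.sum_Ico_succ_top (by omega), show (j-1)+1 = j from by omega]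
          have t1 := tel (j-1) 0 (fun i h1 h2 => hrne i (by omega) (by omega))
          simp only [Nat.zero_add] at t1
          have t2 := tel (n-j-1) (j+1) (fun i h1 h2 => hrne i (by omega) (by omega))
          rw [show (j+1) + (n-j-1) = n from by omega] at t2
          rw [s1, s2, s3, t1, t2, hrj, gpy, gyp]
          have h0 : r 0 ≠ p := hrne 0 (by omega) (by omega)
          have hm : r (j-1) ≠ p := hrne (j-1) (by omega) (by omega)
          have hp1 : r (j+1) ≠ p := hrne (j+1) (by omega) (by omega)
          have hnn : r n ≠ p := hrne n (by omega) (by omega)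
          have e1 : g d (r 0) + g (r 0) (r (j-1)) = g d (r (j-1)) := gadd _ _ _ hdp h0 hm
          have e2 : g (r (j+1)) (r n) + g (r n) d = g (r (j+1)) d := gadd _ _ _ hp1 hnn hdp
          have e3 : g (r (j+1)) d + g d (r (j-1)) = g (r (j+1)) (r (j-1)) := gadd _ _ _ hp1 hdp hm
          have e4 := gsym d (r n)
          have : g (r 0) (r (j-1)) + 0 + 0 + g (r (j+1)) (r n) + g d (r 0) - g d (r n)
              = g (r (j+1)) (r (j-1)) := by linarith
          rw [this]
          exact gbd (r (j+1)) (r (j-1))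
    · -- p not in the cycle
      have hrp : ∀ i, i ≤ n → r i ≠ p := by
        intro i hi hip
        exact hpm (by rw [← hip]; exact hrmem i hi)
      have t := tel n 0 (fun i h1 h2 => hrp i (by omega))
      simp only [Nat.zero_add] at t
      rw [t]
      have e1 : g d (r 0) + g (r 0) (r n) = g d (r n) :=
        gadd _ _ _ hdp (hrp 0 (by omega)) (hrp n (by omega))
      have : g (r 0) (r n) + g d (r 0) - g d (r n) = 0 := by linarith
      rw [this]
      norm_num


lemma starFun_props {V : Type*} {p : V} {O I : Set V} (h : IsStarPartition p O I) :
    IsAlt (starFun p O I) ∧ IsCocycle (starFun p O I) ∧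
    (∀ a b c, a ≠ p → b ≠ p → c ≠ p → starFun p O I a b c = 0) ∧
    (∀ a b c, |starFun p O I a b c| ≤ 1) := by
  obtain ⟨hO, hI, hpO, hpI, hdisj, huniv⟩ := h
  have hmem : ∀ x : V, x ≠ p → x ∉ I → x ∈ O := by
    intro x hx hxI
    have hx' : x ∈ insert p (O ∪ I) := huniv ▸ Set.mem_univ x
    rcases Set.mem_insert_iff.mp hx' with h | h
    · exact absurd h hx
    · rcases h with h | h
      · exact h
      · exact absurd h hxI
  have sE : ∀ x y : V, starEdge O I x y =
      if x = p then 0 else if y = p then 0 else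
        ((if y ∈ I then (1:ℤ) else 0) - (if x ∈ I then 1 else 0)) := by
    intro x y
    by_cases hx : x = p
    · subst hx; simp [starEdge, hpO, hpI]
    · by_cases hy : y = p
      · subst hy; simp [starEdge, hpO, hpI, hx]
      · simp only [starEdge, if_neg hx, if_neg hy]
        by_cases hxI : x ∈ I <;> by_cases hyI : y ∈ I
        · have hxO : x ∉ O := fun hh => (Set.disjoint_left.mp hdisj hh) hxI
          have hyO : y ∉ O := fun hh => (Set.disjoint_left.mp hdisj hh) hyI
          simp [hxI, hyI, hxO, hyO]
        · have hyO : y ∈ O := hmem y hy hyI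
          have hxO : x ∉ O := fun hh => (Set.disjoint_left.mp hdisj hh) hxI
          simp [hxI, hyI, hxO, hyO]
        · have hxO : x ∈ O := hmem x hx hxI
          simp [hxI, hyI, hxO]
        · have hxO : x ∈ O := hmem x hx hxI
          have hyO : y ∉ I := hyI
          simp [hxI, hyI, hxO]
  refine ⟨⟨fun a b c => ?_, fun a b c => ?_⟩, fun a b c d => ?_, fun a b c ha hb hc => ?_,
    fun a b c => ?_⟩
  · simp only [starFun, sE]
    split_ifs <;> (try subst_vars) <;> ring
  · simp only [starFun, sE]
    split_ifs <;> (try subst_vars) <;> ring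
  · simp only [starFun, sE]
    split_ifs <;> (try subst_vars) <;> ring
  · simp [starFun, ha, hb, hc]
  · simp only [starFun, sE]
    split_ifs <;> (try subst_vars) <;> norm_num

lemma bil_linking {V : Type*} {W : Type*} (lam : V → V → V → W → W → W → ℤ)
    (hbl : IsBilinking lam) (C : List V) :
    IsLinkingFun (fun u v w => cycleVal (fun a b c => lam a b c u v w) C) := by
  cases C with
  | nil =>
    refine ⟨⟨fun a b c => ?_, fun a b c => ?_⟩, fun a b c d => ?_⟩ <;> simp [cycleVal]
  | cons c cr =>
    refine ⟨⟨fun u v w => ?_, fun u v w => ?_⟩, fun u v w x => ?_⟩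
    · simp only [cycleVal]
      rw [← Finset.sum_neg_distrib]
      exact Finset.sum_congr rfl fun i _ => (hbl.2 _ _ _).1.1 u v w
    · simp only [cycleVal]
      rw [← Finset.sum_neg_distrib]
      exact Finset.sum_congr rfl fun i _ => (hbl.2 _ _ _).1.2 u v w
    · simp only [cycleVal]
      rw [← Finset.sum_sub_distrib, ← Finset.sum_add_distrib, ← Finset.sum_sub_distrib]
      exact Finset.sum_eq_zero fun i _ => (hbl.2 _ _ _).2 u v w x

lemma fubini {V : Type*} {W : Type*} (lam : V → V → V → W → W → W → ℤ)
    (c : V) (cr : List V) (d : W) (dr : List W) :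
    biCycleVal lam (c :: cr) (d :: dr) =
      cycleVal (fun u v w => cycleVal (fun a b c' => lam a b c' u v w) (c :: cr)) (d :: dr) := by
  simp only [biCycleVal, cycleVal]
  exact Finset.sum_comm

end Aux

/-- if a vertex `q` of `W` is common to all triangles of `W` linking
`V`, and every triangle of `W` linking `V` links it in a star, then `K_V` and `K_W`
are not strongly linked. -/
theorem common_vertex_star_implies_not_strong {V : Type*} {W : Type*}
    [Fintype V] [Fintype W]
    (hV : 3 ≤ Fintype.card V) (hW : 3 ≤ Fintype.card W)
    (lam : V → V → V → W → W → W → ℤ)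
    (hbl : IsBilinking lam)
    (q : W)
    (hq : ∀ u v w : W, q ∉ ({u, v, w} : Set W) →
        ∀ C : List V, IsCycle C →
          cycleVal (fun a b c => lam a b c u v w) C = 0)
    (hstar : ∀ u v w : W, [u, v, w].Nodup →
        (∃ a b c : V, lam a b c u v w ≠ 0) →
        ∃ (p : V) (O I : Set V), IsStarPartition p O I ∧
          (fun a b c => lam a b c u v w) = starFun p O I) :
    ∀ (C : List V) (D : List W), IsCycle C → IsCycle D →
      |biCycleVal lam C D| ≤ 1 := by
  intro C D hC hD
  rcases C with _ | ⟨c, cr⟩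
  · exact absurd hC.2 (by simp)
  rcases D with _ | ⟨d, dr⟩
  · exact absurd hD.2 (by simp)
  set φ : W → W → W → ℤ :=
    fun u v w => cycleVal (fun a b c' => lam a b c' u v w) (c :: cr) with hφ
  have hlink : IsLinkingFun φ := bil_linking lam hbl (c :: cr)
  have hsupp : ∀ u v w, u ≠ q → v ≠ q → w ≠ q → φ u v w = 0 := by
    intro u v w hu hv hw
    exact hq u v w
      (by simp [Set.mem_insert_iff, Set.mem_singleton_iff, Ne.symm hu, Ne.symm hv, Ne.symm hw])
      (c :: cr) hC
  have hbdφ : ∀ u v w, |φ u v w| ≤ 1 := by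
    intro u v w
    by_cases huv : u = v
    · rw [huv, alt_aab hlink.1]; norm_num
    by_cases huw : u = w
    · rw [← huw, alt_aba hlink.1]; norm_num
    by_cases hvw : v = w
    · rw [hvw, alt_abb hlink.1]; norm_num
    by_cases hz : ∀ a b c', lam a b c' u v w = 0
    · have hz' : (fun a b c' => lam a b c' u v w) = fun _ _ _ => (0:ℤ) := by
        funext a b c'; exact hz a b c'
      show |cycleVal (fun a b c' => lam a b c' u v w) (c :: cr)| ≤ 1
      rw [hz', cycleVal_zero]
      norm_num
    · push_neg at hz
      obtain ⟨p, O, I, hpart, heq⟩ := hstar u v w (by simp [huv, huw, hvw]) hz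
      obtain ⟨h1, h2, h3, h4⟩ := starFun_props hpart
      show |cycleVal (fun a b c' => lam a b c' u v w) (c :: cr)| ≤ 1
      rw [heq]
      exact key (starFun p O I) h1 h2 p h3 h4 (c :: cr) hC
  have := key φ hlink.1 hlink.2 q hsupp hbdφ (d :: dr) hD
  rw [fubini lam c cr d dr]
  exact this
end

section
/- Weakness of the common-triangle model: let V = {p₁,p₂,p₃} ∪ X and W = {q} ∪ I₀ ∪ I₁ ∪ I₂ ∪ I₃ (disjoint unions, with I₁,I₂,I₃ nonempty), and define a bilinking form λ between V and W by declaring, for each x ∈ X: the triangles T₀ = (p₁,p₂,p₃), T₁(x) = (p₃,p₂,x), T₂(x) = (x,p₁,p₃), T₃(x) = (p₂,p₁,x) link W in the star functions qO_iI_i respectively (O_i = W − {q} − I_i), and λ(S,·) = 0 on cycles for every triangle S of V not of one of these forms up to reorientation. Then K_V and K_W are weakly linked under λ: |λ(C,D)| ≤ 1 for all cycles C in V and D in W. -/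
open scoped Classical

section Aux

variable {α : Type*}

/-- cyclic edge sum of an edge function over a list, viewed as a closed cycle -/
private def cSum (F : α → α → ℤ) : List α → ℤ
  | [] => 0
  | v :: r => ∑ i ∈ Finset.range (r.length + 1),
      F ((v :: r).getD i v) ((v :: r).getD ((i + 1) % (r.length + 1)) v)

private def dlt (F : α → α → ℤ) (a b c : α) : ℤ := F b c - F a c + F a b

private noncomputable def Edg (c : α) (ψ : α → ℤ) (u v : α) : ℤ :=
  (if v = c then ψ u else 0) - (if u = c then ψ v else 0)

private lemma Edg_anti (c : α) (ψ : α → ℤ) (u v : α) : Edg c ψ v u = -Edg c ψ u v := by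
  simp only [Edg]; ring

private lemma cycleVal_congr {f g : α → α → α → ℤ} (h : ∀ a b c, f a b c = g a b c)
    (l : List α) : cycleVal f l = cycleVal g l := by
  cases l with
  | nil => rfl
  | cons v r => simp only [cycleVal, h]

private lemma cycleVal_neg (f : α → α → α → ℤ) (l : List α) :
    cycleVal (fun a b c => -f a b c) l = -cycleVal f l := by
  cases l with
  | nil => simp [cycleVal]
  | cons v r => simp [cycleVal, Finset.sum_neg_distrib]

private lemma cycleVal_comb (f1 f2 f3 : α → α → α → ℤ) (l : List α) :
    cycleVal (fun a b c => f1 a b c - f2 a b c + f3 a b c) l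
      = cycleVal f1 l - cycleVal f2 l + cycleVal f3 l := by
  cases l with
  | nil => simp [cycleVal]
  | cons v r => simp [cycleVal, Finset.sum_add_distrib, Finset.sum_sub_distrib]

private lemma cSum_congr {F G : α → α → ℤ} (h : ∀ u v, F u v = G u v) (l : List α) :
    cSum F l = cSum G l := by
  cases l with
  | nil => rfl
  | cons v r => simp only [cSum, h]

private lemma cSum_sub (F G : α → α → ℤ) (l : List α) :
    cSum (fun u v => F u v - G u v) l = cSum F l - cSum G l := by
  cases l with
  | nil => simp [cSum]
  | cons v r => simp [cSum, Finset.sum_sub_distrib]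

private lemma cSum_neg (F : α → α → ℤ) (l : List α) :
    cSum (fun u v => -(F u v)) l = -cSum F l := by
  cases l with
  | nil => simp [cSum]
  | cons v r => simp [cSum, Finset.sum_neg_distrib]

private lemma cSum_comb3 (F₁ F₂ F₃ : α → α → ℤ) (z₁ z₂ z₃ : ℤ) (l : List α) :
    cSum (fun u v => F₁ u v * z₁ + F₂ u v * z₂ + F₃ u v * z₃) l
      = cSum F₁ l * z₁ + cSum F₂ l * z₂ + cSum F₃ l * z₃ := by
  cases l with
  | nil => simp [cSum]
  | cons v r => simp [cSum, Finset.sum_add_distrib, Finset.sum_mul]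

private lemma succ_mod_inj {n a b : ℕ} (ha : a < n) (hb : b < n)
    (h : (a + 1) % n = (b + 1) % n) : a = b := by
  rcases Nat.lt_or_ge (a + 1) n with h1 | h1 <;> rcases Nat.lt_or_ge (b + 1) n with h2 | h2
  · rw [Nat.mod_eq_of_lt h1, Nat.mod_eq_of_lt h2] at h; omega
  · have hb1 : b + 1 = n := by omega
    rw [Nat.mod_eq_of_lt h1, hb1, Nat.mod_self] at h; omega
  · have ha1 : a + 1 = n := by omega
    rw [ha1, Nat.mod_self, Nat.mod_eq_of_lt h2] at h; omega
  · omega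

private lemma getD_mem (l : List α) (j : ℕ) (d : α) (hd : d ∈ l) : l.getD j d ∈ l := by
  by_cases h : j < l.length
  · rw [List.getD_eq_getElem l d h]; exact List.getElem_mem h
  · rwa [List.getD_eq_default l d (le_of_not_gt h)]

private lemma cycleVal_dlt (F : α → α → ℤ) (hF : ∀ a b, F b a = -F a b) (l : List α) :
    cycleVal (dlt F) l = cSum F l := by
  have hFv : ∀ a, F a a = 0 := fun a => by have := hF a a; linarith
  match l with
  | [] => rfl
  | [v] => simp [cycleVal, cSum, hFv]
  | v :: w :: r =>
    have hLHS : cycleVal (dlt F) (v :: w :: r) =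
        (∑ i ∈ Finset.range r.length, F ((w :: r).getD i v) ((w :: r).getD (i + 1) v))
          - (F v ((w :: r).getD r.length v) - F v ((w :: r).getD 0 v)) := by
      show (∑ i ∈ Finset.range ((w :: r).length - 1),
          dlt F v ((w :: r).getD i v) ((w :: r).getD (i + 1) v)) = _
      have hl : (w :: r).length - 1 = r.length := by simp
      rw [hl]
      have hterm : ∀ i, dlt F v ((w :: r).getD i v) ((w :: r).getD (i + 1) v)
          = F ((w :: r).getD i v) ((w :: r).getD (i + 1) v)
            - (F v ((w :: r).getD (i + 1) v) - F v ((w :: r).getD i v)) := by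
        intro i; simp only [dlt]; ring
      rw [Finset.sum_congr rfl fun i _ => hterm i, Finset.sum_sub_distrib,
        Finset.sum_range_sub (fun i => F v ((w :: r).getD i v))]
    have hRHS : cSum F (v :: w :: r) =
        (∑ i ∈ Finset.range r.length, F ((w :: r).getD i v) ((w :: r).getD (i + 1) v))
          + F v ((w :: r).getD 0 v) + F ((w :: r).getD r.length v) v := by
      show (∑ i ∈ Finset.range ((w :: r).length + 1),
          F ((v :: w :: r).getD i v)
            ((v :: w :: r).getD ((i + 1) % ((w :: r).length + 1)) v)) = _
      rw [Finset.sum_range_succ, Nat.mod_self]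
      have h1 : ∀ i ∈ Finset.range (w :: r).length,
          F ((v :: w :: r).getD i v)
            ((v :: w :: r).getD ((i + 1) % ((w :: r).length + 1)) v)
          = F ((v :: w :: r).getD i v) ((v :: w :: r).getD (i + 1) v) := by
        intro i hi
        rw [Nat.mod_eq_of_lt (by simpa using Nat.succ_lt_succ (Finset.mem_range.mp hi))]
      rw [Finset.sum_congr rfl h1]
      have hl : (w :: r).length = r.length + 1 := rfl
      rw [hl, Finset.sum_range_succ']
      simp only [List.getD_cons_succ, List.getD_cons_zero]
    rw [hLHS, hRHS]
    have := hF v ((w :: r).getD r.length v)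
    linarith

private lemma abs_cSum_Edg_le (c : α) (ψ : α → ℤ) (hψ : ∀ w w', |ψ w - ψ w'| ≤ 1)
    (l : List α) (hl : l.Nodup) : |cSum (Edg c ψ) l| ≤ 1 := by
  cases l with
  | nil => simp [cSum]
  | cons v r =>
    have hL : (v :: r).length = r.length + 1 := rfl
    by_cases hc : c ∈ v :: r
    · obtain ⟨m, hm, hmc⟩ := List.getElem_of_mem hc
      rw [hL] at hm
      have hinj : ∀ i j, i < r.length + 1 → j < r.length + 1 →
          (v :: r).getD i v = (v :: r).getD j v → i = j := by
        intro i j hi hj hij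
        rw [List.getD_eq_getElem _ _ (by omega : i < (v :: r).length),
          List.getD_eq_getElem _ _ (by omega : j < (v :: r).length)] at hij
        exact (List.Nodup.getElem_inj_iff hl).mp hij
      have hmd : (v :: r).getD m v = c := by
        rw [List.getD_eq_getElem _ _ (by omega : m < (v :: r).length)]; exact hmc
      set m' := if m = 0 then r.length else m - 1 with hm'
      have hm'lt : m' < r.length + 1 := by rw [hm']; split <;> omega
      have hm'succ : (m' + 1) % (r.length + 1) = m := by
        rw [hm']; split
        · rw [Nat.mod_self]; omega
        · have : m - 1 + 1 = m := by omega
          rw [this, Nat.mod_eq_of_lt hm]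
      have S1 : (∑ i ∈ Finset.range (r.length + 1),
          (if (v :: r).getD ((i + 1) % (r.length + 1)) v = c
            then ψ ((v :: r).getD i v) else 0)) = ψ ((v :: r).getD m' v) := by
        rw [Finset.sum_eq_single_of_mem m' (Finset.mem_range.mpr hm'lt)]
        · rw [if_pos (by rw [hm'succ]; exact hmd)]
        · intro b hb hbm'
          by_cases hcond : (v :: r).getD ((b + 1) % (r.length + 1)) v = c
          · exfalso
            have hblt := Finset.mem_range.mp hb
            have hlt : (b + 1) % (r.length + 1) < r.length + 1 := Nat.mod_lt _ (by omega)
            have heqm : (b + 1) % (r.length + 1) = m :=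
              hinj _ _ hlt hm (hcond.trans hmd.symm)
            exact hbm' (succ_mod_inj hblt hm'lt (by rw [heqm, hm'succ]))
          · rw [if_neg hcond]
      have S2 : (∑ i ∈ Finset.range (r.length + 1),
          (if (v :: r).getD i v = c
            then ψ ((v :: r).getD ((i + 1) % (r.length + 1)) v) else 0))
          = ψ ((v :: r).getD ((m + 1) % (r.length + 1)) v) := by
        rw [Finset.sum_eq_single_of_mem m (Finset.mem_range.mpr hm)]
        · rw [if_pos hmd]
        · intro b hb hbm
          by_cases hcond : (v :: r).getD b v = c
          · exact absurd (hinj _ _ (Finset.mem_range.mp hb) hm (hcond.trans hmd.symm)) hbm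
          · rw [if_neg hcond]
      have key : cSum (Edg c ψ) (v :: r)
          = ψ ((v :: r).getD m' v) - ψ ((v :: r).getD ((m + 1) % (r.length + 1)) v) := by
        show (∑ i ∈ Finset.range (r.length + 1),
          Edg c ψ ((v :: r).getD i v) ((v :: r).getD ((i + 1) % (r.length + 1)) v)) = _
        simp only [Edg]
        rw [Finset.sum_sub_distrib, S1, S2]
      rw [key]; exact hψ _ _
    · have hz : ∀ i ∈ Finset.range (r.length + 1),
          Edg c ψ ((v :: r).getD i v) ((v :: r).getD ((i + 1) % (r.length + 1)) v) = 0 := by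
        intro i _
        have h1 : (v :: r).getD i v ≠ c := fun h => hc (h ▸ getD_mem _ _ _ (by simp))
        have h2 : (v :: r).getD ((i + 1) % (r.length + 1)) v ≠ c :=
          fun h => hc (h ▸ getD_mem _ _ _ (by simp))
        simp only [Edg, if_neg h1, if_neg h2, sub_self]
      have : cSum (Edg c ψ) (v :: r) = 0 := by
        show (∑ i ∈ Finset.range (r.length + 1),
          Edg c ψ ((v :: r).getD i v) ((v :: r).getD ((i + 1) % (r.length + 1)) v)) = 0
        exact Finset.sum_eq_zero hz
      rw [this]; simp

private lemma indP_bound (P : α → Prop) :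
    ∀ w w', |(if P w then (1:ℤ) else 0) - (if P w' then 1 else 0)| ≤ 1 := by
  intro w w'; by_cases h : P w <;> by_cases h' : P w' <;> simp [h, h']

private lemma indP2_bound (P Q : α → Prop) (hPQ : ∀ w, ¬(P w ∧ Q w)) :
    ∀ w w', |((if P w then (1:ℤ) else 0) + (if Q w then 1 else 0))
      - ((if P w' then 1 else 0) + (if Q w' then 1 else 0))| ≤ 1 := by
  intro w w'
  by_cases h1 : P w <;> by_cases h2 : Q w <;> by_cases h3 : P w' <;> by_cases h4 : Q w' <;>
    first
      | exact absurd ⟨‹_›, ‹_›⟩ (hPQ _)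
      | simp [h1, h2, h3, h4]

private lemma starFun_eq_dlt {β : Type*} (q : β) (I : Set β) (hq : q ∉ I) :
    ∀ a b c : β, starFun q ((insert q I)ᶜ) I a b c
      = dlt (Edg q (fun w => if w ∈ I then (1:ℤ) else 0)) a b c := by
  intro a b c
  simp only [starFun, starEdge, dlt, Edg, Set.mem_compl_iff, Set.mem_insert_iff]
  by_cases ha : a = q <;> by_cases hb : b = q <;> by_cases hc : c = q <;>
    by_cases hA : a ∈ I <;> by_cases hB : b ∈ I <;> by_cases hC : c ∈ I <;>
      simp_all

end Aux

/-- weakness of the common-triangle model. -/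
theorem common_triangle_model_weak {V : Type*} {W : Type*}
    [Fintype V] [Fintype W] [DecidableEq V]
    (p₁ p₂ p₃ : V) (hp12 : p₁ ≠ p₂) (hp13 : p₁ ≠ p₃) (hp23 : p₂ ≠ p₃)
    (q : W) (I₀ I₁ I₂ I₃ : Set W)
    (hqI : q ∉ I₀ ∧ q ∉ I₁ ∧ q ∉ I₂ ∧ q ∉ I₃)
    (hdisj : Disjoint I₀ I₁ ∧ Disjoint I₀ I₂ ∧ Disjoint I₀ I₃ ∧
      Disjoint I₁ I₂ ∧ Disjoint I₁ I₃ ∧ Disjoint I₂ I₃)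
    (hunion : insert q (I₀ ∪ I₁ ∪ I₂ ∪ I₃) = (Set.univ : Set W))
    (hne : I₁.Nonempty ∧ I₂.Nonempty ∧ I₃.Nonempty)
    (lam : V → V → V → W → W → W → ℤ)
    (hbl : IsBilinking lam)
    -- T₀ = (p₁,p₂,p₃) links W in the star q O₀ I₀
    (hT₀ : lam p₁ p₂ p₃ = starFun q ((insert q I₀)ᶜ) I₀)
    -- for each x ∉ {p₁,p₂,p₃}: the triangles T₁(x), T₂(x), T₃(x) link W in the
    -- stars q Oᵢ Iᵢ
    (hT₁ : ∀ x : V, x ∉ ({p₁, p₂, p₃} : Set V) →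
      lam p₃ p₂ x = starFun q ((insert q I₁)ᶜ) I₁)
    (hT₂ : ∀ x : V, x ∉ ({p₁, p₂, p₃} : Set V) →
      lam x p₁ p₃ = starFun q ((insert q I₂)ᶜ) I₂)
    (hT₃ : ∀ x : V, x ∉ ({p₁, p₂, p₃} : Set V) →
      lam p₂ p₁ x = starFun q ((insert q I₃)ᶜ) I₃)
    -- every triangle of V not of one of these forms up to reorientation has
    -- λ-value 0 against all cycles of W
    (hother : ∀ a b c : V, a ≠ b → a ≠ c → b ≠ c →
      (({a, b, c} : Finset V) ∩ ({p₁, p₂, p₃} : Finset V)).card ≤ 1 →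
      ∀ D : List W, IsCycle D → cycleVal (lam a b c) D = 0) :
    ∀ (C : List V) (D : List W), IsCycle C → IsCycle D →
      |biCycleVal lam C D| ≤ 1 := by
  intro C D hC hD
  classical
  -- the V-side linking function induced by D
  set g : V → V → V → ℤ := fun a b c => cycleVal (lam a b c) D with hg
  have hbig : biCycleVal lam C D = cycleVal g C := by rw [hg]; rfl
  -- star values
  set s0 : ℤ := cycleVal (starFun q ((insert q I₀)ᶜ) I₀) D with hs0
  set s1 : ℤ := cycleVal (starFun q ((insert q I₁)ᶜ) I₁) D with hs1
  set s2 : ℤ := cycleVal (starFun q ((insert q I₂)ᶜ) I₂) D with hs2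
  set s3 : ℤ := cycleVal (starFun q ((insert q I₃)ᶜ) I₃) D with hs3
  -- alternation and cocycle of g
  have galt1 : ∀ a b c : V, g b a c = -g a b c := by
    intro a b c
    have h : ∀ u v w, lam b a c u v w = -lam a b c u v w :=
      fun u v w => (hbl.1 u v w).1.1 a b c
    simp only [hg]
    rw [cycleVal_congr h, cycleVal_neg]
  have galt2 : ∀ a b c : V, g a c b = -g a b c := by
    intro a b c
    have h : ∀ u v w, lam a c b u v w = -lam a b c u v w :=
      fun u v w => (hbl.1 u v w).1.2 a b c
    simp only [hg]
    rw [cycleVal_congr h, cycleVal_neg]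
  have gz1 : ∀ a b : V, g a a b = 0 := fun a b => by have := galt1 a a b; linarith
  have gz2 : ∀ a b : V, g a b b = 0 := fun a b => by have := galt2 a b b; linarith
  have gz3 : ∀ a b : V, g a b a = 0 := fun a b => by
    have h := galt2 a a b; rw [gz1] at h; linarith
  have gco : ∀ a b c d : V, g b c d - g a c d + g a b d - g a b c = 0 := by
    intro a b c d
    have hp : ∀ u v w, lam b c d u v w
        = lam a c d u v w - lam a b d u v w + lam a b c u v w := by
      intro u v w
      have hco : lam b c d u v w - lam a c d u v w + lam a b d u v w
          - lam a b c u v w = 0 := (hbl.1 u v w).2 a b c d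
      linarith
    have hmain : g b c d = g a c d - g a b d + g a b c := by
      simp only [hg]
      rw [cycleVal_congr hp, cycleVal_comb]
    linarith
  -- values of g on the marked triangles
  have gv_s1 : ∀ x : V, x ≠ p₁ → x ≠ p₂ → x ≠ p₃ → g p₃ p₂ x = s1 := by
    intro x h1 h2 h3
    simp only [hg]
    rw [hT₁ x (by simp [Set.mem_insert_iff, Set.mem_singleton_iff, h1, h2, h3]), hs1]
  have gv_s2 : ∀ x : V, x ≠ p₁ → x ≠ p₂ → x ≠ p₃ → g x p₁ p₃ = s2 := by
    intro x h1 h2 h3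
    simp only [hg]
    rw [hT₂ x (by simp [Set.mem_insert_iff, Set.mem_singleton_iff, h1, h2, h3]), hs2]
  have gv_s3 : ∀ x : V, x ≠ p₁ → x ≠ p₂ → x ≠ p₃ → g p₂ p₁ x = s3 := by
    intro x h1 h2 h3
    simp only [hg]
    rw [hT₃ x (by simp [Set.mem_insert_iff, Set.mem_singleton_iff, h1, h2, h3]), hs3]
  have gv0a : g p₁ p₂ p₃ = s0 := by simp only [hg]; rw [hT₀, hs0]
  have gv0b : g p₂ p₁ p₃ = -s0 := by have := galt1 p₁ p₂ p₃; rw [gv0a] at this; linarith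
  have gv0c : g p₁ p₃ p₂ = -s0 := by have := galt2 p₁ p₂ p₃; rw [gv0a] at this; linarith
  have gv0d : g p₂ p₃ p₁ = s0 := by have := galt2 p₂ p₁ p₃; rw [gv0b] at this; linarith
  have gv0e : g p₃ p₁ p₂ = s0 := by have := galt1 p₁ p₃ p₂; rw [gv0c] at this; linarith
  have gv0f : g p₃ p₂ p₁ = -s0 := by have := galt2 p₃ p₁ p₂; rw [gv0e] at this; linarith
  -- derived values
  have gv_s1b : ∀ x : V, x ≠ p₁ → x ≠ p₂ → x ≠ p₃ → g p₃ x p₂ = -s1 := by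
    intro x h1 h2 h3
    have h := galt2 p₃ p₂ x; rw [gv_s1 x h1 h2 h3] at h; linarith
  have gv_s2a : ∀ x : V, x ≠ p₁ → x ≠ p₂ → x ≠ p₃ → g p₁ p₃ x = s2 := by
    intro x h1 h2 h3
    have ha := galt1 x p₁ p₃   -- g p₁ x p₃ = -g x p₁ p₃
    have hb := galt2 p₁ p₃ x   -- g p₁ x p₃ = -g p₁ p₃ x
    rw [gv_s2 x h1 h2 h3] at ha
    linarith
  have gv_s2b : ∀ x : V, x ≠ p₁ → x ≠ p₂ → x ≠ p₃ → g p₃ p₁ x = -s2 := by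
    intro x h1 h2 h3
    have h := galt1 p₁ p₃ x; rw [gv_s2a x h1 h2 h3] at h; linarith
  have gv_s2c : ∀ x : V, x ≠ p₁ → x ≠ p₂ → x ≠ p₃ → g p₃ x p₁ = s2 := by
    intro x h1 h2 h3
    have h := galt2 p₃ p₁ x; rw [gv_s2b x h1 h2 h3] at h; linarith
  have gv_s3a : ∀ x : V, x ≠ p₁ → x ≠ p₂ → x ≠ p₃ → g p₁ p₂ x = -s3 := by
    intro x h1 h2 h3
    have h := galt1 p₂ p₁ x; rw [gv_s3 x h1 h2 h3] at h; linarith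
  -- trichotomy
  have tri : ∀ v : V, v = p₁ ∨ v = p₂ ∨ v = p₃ ∨ (v ≠ p₁ ∧ v ≠ p₂ ∧ v ≠ p₃) := by
    intro v
    by_cases h1 : v = p₁
    · exact Or.inl h1
    by_cases h2 : v = p₂
    · exact Or.inr (Or.inl h2)
    by_cases h3 : v = p₃
    · exact Or.inr (Or.inr (Or.inl h3))
    · exact Or.inr (Or.inr (Or.inr ⟨h1, h2, h3⟩))
  -- |s0| ≤ 1 always
  have habs0 : |s0| ≤ 1 := by
    have h1 : s0 = cSum (Edg q (fun w => if w ∈ I₀ then (1:ℤ) else 0)) D := by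
      rw [hs0, cycleVal_congr (starFun_eq_dlt q I₀ hqI.1),
        cycleVal_dlt _ (fun a b => Edg_anti q _ a b)]
    rw [h1]
    exact abs_cSum_Edg_le q _ (indP_bound (· ∈ I₀)) D hD.1
  by_cases hX : ∃ x : V, x ≠ p₁ ∧ x ≠ p₂ ∧ x ≠ p₃
  · -- main case: there is a vertex outside the triangle
    obtain ⟨x₀, hx₀1, hx₀2, hx₀3⟩ := hX
    have hs0rel : s0 = -s1 - s2 - s3 := by
      have h := gco p₁ p₂ p₃ x₀
      -- g p₂ p₃ x₀ - g p₁ p₃ x₀ + g p₁ p₂ x₀ - g p₁ p₂ p₃ = 0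
      have h1 : g p₂ p₃ x₀ = -s1 := by
        have := galt1 p₃ p₂ x₀; rw [gv_s1 x₀ hx₀1 hx₀2 hx₀3] at this; linarith
      rw [h1, gv_s2a x₀ hx₀1 hx₀2 hx₀3, gv_s3a x₀ hx₀1 hx₀2 hx₀3, gv0a] at h
      linarith
    -- the edge function F on V
    set x1 : V → ℤ := fun w => if w = p₁ then 1 else 0 with hx1
    set x2 : V → ℤ := fun w => if w = p₂ then 1 else 0 with hx2
    set x3 : V → ℤ := fun w => if w = p₃ then 1 else 0 with hx3
    set F : V → V → ℤ :=
      fun a b => Edg p₂ x3 a b * s1 + Edg p₃ x1 a b * s2 + Edg p₁ x2 a b * s3 with hF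
    have hFanti : ∀ a b : V, F b a = -F a b := by
      intro a b
      simp only [hF]
      rw [Edg_anti p₂ x3 a b, Edg_anti p₃ x1 a b, Edg_anti p₁ x2 a b]; ring
    have hFdiag : ∀ a : V, F a a = 0 := fun a => by have := hFanti a a; linarith
    -- F values
    have hFp3p2 : F p₃ p₂ = s1 := by
      simp only [hF, Edg, hx1, hx2, hx3]
      simp [hp12, hp13, hp23, Ne.symm hp12, Ne.symm hp13, Ne.symm hp23]
    have hFp1p3 : F p₁ p₃ = s2 := by
      simp only [hF, Edg, hx1, hx2, hx3]
      simp [hp12, hp13, hp23, Ne.symm hp12, Ne.symm hp13, Ne.symm hp23]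
    have hFp2p1 : F p₂ p₁ = s3 := by
      simp only [hF, Edg, hx1, hx2, hx3]
      simp [hp12, hp13, hp23, Ne.symm hp12, Ne.symm hp13, Ne.symm hp23]
    have hFp2p3 : F p₂ p₃ = -s1 := by rw [hFanti, hFp3p2]
    have hFp3p1 : F p₃ p₁ = -s2 := by rw [hFanti, hFp1p3]
    have hFp1p2 : F p₁ p₂ = -s3 := by rw [hFanti, hFp2p1]
    have hFxa : ∀ a b : V, b ≠ p₁ → b ≠ p₂ → b ≠ p₃ → F a b = 0 := by
      intro a b h1 h2 h3
      simp only [hF, Edg, hx1, hx2, hx3]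
      simp [h1, h2, h3]
    have hFax : ∀ a b : V, a ≠ p₁ → a ≠ p₂ → a ≠ p₃ → F a b = 0 := by
      intro a b h1 h2 h3
      have := hFanti a b
      rw [hFxa b a h1 h2 h3] at this; linarith
    -- the key identity on triangles through p₃
    have hkey : ∀ y z : V, g p₃ y z = dlt F p₃ y z := by
      intro y z
      by_cases hy3 : y = p₃
      · rw [hy3, gz1]; simp [dlt, hFdiag]
      by_cases hz3 : z = p₃
      · rw [hz3, gz3]
        have := hFanti y p₃
        simp only [dlt, hFdiag]; linarith
      by_cases hyz : y = z
      · rw [hyz, gz2]; simp [dlt, hFdiag]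
      rcases tri y with hy | hy | hy | ⟨hy1, hy2, hy3'⟩ <;>
        rcases tri z with hz | hz | hz | ⟨hz1, hz2, hz3'⟩
      · exact absurd (hy.trans hz.symm) hyz
      · -- (p₁, p₂)
        rw [hy, hz, gv0e]
        simp only [dlt, hFp1p2, hFp3p2, hFp3p1]
        linarith
      · exact absurd hz hz3
      · -- (p₁, x)
        rw [hy, gv_s2b z hz1 hz2 hz3']
        simp only [dlt, hFxa p₁ z hz1 hz2 hz3', hFxa p₃ z hz1 hz2 hz3', hFp3p1]
        ring
      · -- (p₂, p₁)
        rw [hy, hz, gv0f]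
        simp only [dlt, hFp2p1, hFp3p1, hFp3p2]
        linarith
      · exact absurd (hy.trans hz.symm) hyz
      · exact absurd hz hz3
      · -- (p₂, x)
        rw [hy, gv_s1 z hz1 hz2 hz3']
        simp only [dlt, hFxa p₂ z hz1 hz2 hz3', hFxa p₃ z hz1 hz2 hz3', hFp3p2]
        ring
      · exact absurd hy hy3
      · exact absurd hy hy3
      · exact absurd hy hy3
      · exact absurd hy hy3
      · -- (x, p₁)
        rw [hz, gv_s2c y hy1 hy2 hy3']
        simp only [dlt, hFax y p₁ hy1 hy2 hy3', hFxa p₃ y hy1 hy2 hy3', hFp3p1]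
        ring
      · -- (x, p₂)
        rw [hz, gv_s1b y hy1 hy2 hy3']
        simp only [dlt, hFax y p₂ hy1 hy2 hy3', hFxa p₃ y hy1 hy2 hy3', hFp3p2]
        ring
      · exact absurd hz hz3
      · -- (x, x')
        have hcard : (({p₃, y, z} : Finset V) ∩ ({p₁, p₂, p₃} : Finset V)).card ≤ 1 := by
          have hsub : ({p₃, y, z} : Finset V) ∩ ({p₁, p₂, p₃} : Finset V)
              ⊆ {p₃} := by
            intro t ht
            simp only [Finset.mem_inter, Finset.mem_insert, Finset.mem_singleton] at ht ⊢
            rcases ht with ⟨h1 | h1 | h1, h2⟩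
            · exact h1
            · subst h1; tauto
            · subst h1; tauto
          exact le_trans (Finset.card_le_card hsub) (by simp)
        have h0 : g p₃ y z = 0 := by
          simp only [hg]
          exact hother p₃ y z (Ne.symm hy3') (Ne.symm hz3') hyz hcard D hD
        rw [h0]
        simp only [dlt, hFax y z hy1 hy2 hy3', hFxa p₃ z hz1 hz2 hz3',
          hFxa p₃ y hy1 hy2 hy3']
        ring
    -- g = dlt F everywhere
    have heq : ∀ a b c : V, g a b c = dlt F a b c := by
      intro a b c
      have h := gco p₃ a b c
      have h1 := hkey b c
      have h2 := hkey a c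
      have h3 := hkey a b
      simp only [dlt] at h1 h2 h3 ⊢
      linarith
    -- edge sums on C
    set e1 : ℤ := cSum (Edg p₂ x3) C with he1
    set e2 : ℤ := cSum (Edg p₃ x1) C with he2
    set e3 : ℤ := cSum (Edg p₁ x2) C with he3
    have hsplit : cycleVal g C = e1 * s1 + e2 * s2 + e3 * s3 := by
      rw [cycleVal_congr heq, cycleVal_dlt F hFanti, hF]
      rw [cSum_comb3 (Edg p₂ x3) (Edg p₃ x1) (Edg p₁ x2) s1 s2 s3 C]
    -- star values as edge sums on D
    set w1 : W → ℤ := fun w => if w ∈ I₁ then 1 else 0 with hw1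
    set w2 : W → ℤ := fun w => if w ∈ I₂ then 1 else 0 with hw2
    set w3 : W → ℤ := fun w => if w ∈ I₃ then 1 else 0 with hw3
    have hs1D : s1 = cSum (Edg q w1) D := by
      rw [hs1, cycleVal_congr (starFun_eq_dlt q I₁ hqI.2.1),
        cycleVal_dlt _ (fun a b => Edg_anti q _ a b), hw1]
    have hs2D : s2 = cSum (Edg q w2) D := by
      rw [hs2, cycleVal_congr (starFun_eq_dlt q I₂ hqI.2.2.1),
        cycleVal_dlt _ (fun a b => Edg_anti q _ a b), hw2]
    have hs3D : s3 = cSum (Edg q w3) D := by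
      rw [hs3, cycleVal_congr (starFun_eq_dlt q I₃ hqI.2.2.2),
        cycleVal_dlt _ (fun a b => Edg_anti q _ a b), hw3]
    set ψ : W → ℤ := fun w => w1 w * e1 + w2 w * e2 + w3 w * e3 with hψ
    have htot : cycleVal g C = cSum (Edg q ψ) D := by
      rw [hsplit, hs1D, hs2D, hs3D]
      rw [mul_comm e1, mul_comm e2, mul_comm e3]
      rw [← cSum_comb3 (Edg q w1) (Edg q w2) (Edg q w3) e1 e2 e3 D]
      refine cSum_congr (fun u v => ?_) D
      simp only [Edg, hψ]
      by_cases hu : u = q <;> by_cases hv : v = q <;> simp [hu, hv] <;> ring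
    -- the six bounds on e1 e2 e3
    have hind : ∀ (t : V) (w w' : V),
        |(if w = t then (1:ℤ) else 0) - (if w' = t then 1 else 0)| ≤ 1 := by
      intro t w w'
      by_cases h : w = t <;> by_cases h' : w' = t <;> simp [h, h']
    have hind2 : ∀ (t t' : V), t ≠ t' → ∀ w w' : V,
        |((if w = t then (1:ℤ) else 0) + (if w = t' then 1 else 0))
          - ((if w' = t then 1 else 0) + (if w' = t' then 1 else 0))| ≤ 1 := by
      intro t t' htt w w'
      by_cases h1 : w = t <;> by_cases h2 : w = t' <;>
        by_cases h3 : w' = t <;> by_cases h4 : w' = t' <;>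
          first
            | exact absurd (h1.symm.trans h2) htt
            | exact absurd (h3.symm.trans h4) htt
            | simp [h1, h2, h3, h4, htt, Ne.symm htt]
    have be1 : |e1| ≤ 1 := by
      rw [he1, hx3]; exact abs_cSum_Edg_le p₂ _ (hind p₃) C hC.1
    have be2 : |e2| ≤ 1 := by
      rw [he2, hx1]; exact abs_cSum_Edg_le p₃ _ (hind p₁) C hC.1
    have be3 : |e3| ≤ 1 := by
      rw [he3, hx2]; exact abs_cSum_Edg_le p₁ _ (hind p₂) C hC.1
    have b12 : |e1 - e2| ≤ 1 := by
      have hpt : ∀ u v : V, Edg p₂ x3 u v - Edg p₃ x1 u v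
          = -(Edg p₃ (fun w : V => (if w = p₁ then (1:ℤ) else 0)
              + (if w = p₂ then 1 else 0)) u v) := by
        intro u v
        simp only [Edg, hx3, hx1]
        by_cases h1 : u = p₁ <;> by_cases h2 : u = p₂ <;> by_cases h3 : u = p₃ <;>
          by_cases h4 : v = p₁ <;> by_cases h5 : v = p₂ <;> by_cases h6 : v = p₃ <;>
            first
              | exact absurd (h1.symm.trans h2) hp12
              | exact absurd (h1.symm.trans h3) hp13
              | exact absurd (h2.symm.trans h3) hp23
              | exact absurd (h4.symm.trans h5) hp12
              | exact absurd (h4.symm.trans h6) hp13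
              | exact absurd (h5.symm.trans h6) hp23
              | simp [h1, h2, h3, h4, h5, h6, hp12, hp13, hp23,
                  Ne.symm hp12, Ne.symm hp13, Ne.symm hp23]
      have hdiff : e1 - e2 = -cSum (Edg p₃ (fun w : V => (if w = p₁ then (1:ℤ) else 0)
          + (if w = p₂ then 1 else 0))) C := by
        rw [he1, he2, ← cSum_sub, cSum_congr hpt, cSum_neg]
      rw [hdiff, abs_neg]
      exact abs_cSum_Edg_le p₃ _ (hind2 p₁ p₂ hp12) C hC.1
    have b13 : |e1 - e3| ≤ 1 := by
      have hpt : ∀ u v : V, Edg p₂ x3 u v - Edg p₁ x2 u v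
          = Edg p₂ (fun w : V => (if w = p₁ then (1:ℤ) else 0)
              + (if w = p₃ then 1 else 0)) u v := by
        intro u v
        simp only [Edg, hx3, hx2]
        by_cases h1 : u = p₁ <;> by_cases h2 : u = p₂ <;> by_cases h3 : u = p₃ <;>
          by_cases h4 : v = p₁ <;> by_cases h5 : v = p₂ <;> by_cases h6 : v = p₃ <;>
            first
              | exact absurd (h1.symm.trans h2) hp12
              | exact absurd (h1.symm.trans h3) hp13
              | exact absurd (h2.symm.trans h3) hp23
              | exact absurd (h4.symm.trans h5) hp12
              | exact absurd (h4.symm.trans h6) hp13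
              | exact absurd (h5.symm.trans h6) hp23
              | simp [h1, h2, h3, h4, h5, h6, hp12, hp13, hp23,
                  Ne.symm hp12, Ne.symm hp13, Ne.symm hp23]
      have hdiff : e1 - e3 = cSum (Edg p₂ (fun w : V => (if w = p₁ then (1:ℤ) else 0)
          + (if w = p₃ then 1 else 0))) C := by
        rw [he1, he3, ← cSum_sub, cSum_congr hpt]
      rw [hdiff]
      exact abs_cSum_Edg_le p₂ _ (hind2 p₁ p₃ hp13) C hC.1
    have b23 : |e2 - e3| ≤ 1 := by
      have hpt : ∀ u v : V, Edg p₃ x1 u v - Edg p₁ x2 u v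
          = -(Edg p₁ (fun w : V => (if w = p₂ then (1:ℤ) else 0)
              + (if w = p₃ then 1 else 0)) u v) := by
        intro u v
        simp only [Edg, hx1, hx2]
        by_cases h1 : u = p₁ <;> by_cases h2 : u = p₂ <;> by_cases h3 : u = p₃ <;>
          by_cases h4 : v = p₁ <;> by_cases h5 : v = p₂ <;> by_cases h6 : v = p₃ <;>
            first
              | exact absurd (h1.symm.trans h2) hp12
              | exact absurd (h1.symm.trans h3) hp13
              | exact absurd (h2.symm.trans h3) hp23
              | exact absurd (h4.symm.trans h5) hp12
              | exact absurd (h4.symm.trans h6) hp13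
              | exact absurd (h5.symm.trans h6) hp23
              | simp [h1, h2, h3, h4, h5, h6, hp12, hp13, hp23,
                  Ne.symm hp12, Ne.symm hp13, Ne.symm hp23]
      have hdiff : e2 - e3 = -cSum (Edg p₁ (fun w : V => (if w = p₂ then (1:ℤ) else 0)
          + (if w = p₃ then 1 else 0))) C := by
        rw [he2, he3, ← cSum_sub, cSum_congr hpt, cSum_neg]
      rw [hdiff, abs_neg]
      exact abs_cSum_Edg_le p₁ _ (hind2 p₂ p₃ hp23) C hC.1
    -- values of ψ
    have hvals : ∀ w : W, ψ w = 0 ∨ ψ w = e1 ∨ ψ w = e2 ∨ ψ w = e3 := by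
      intro w
      simp only [hψ, hw1, hw2, hw3]
      by_cases h1 : w ∈ I₁
      · have h2 : w ∉ I₂ := Set.disjoint_left.mp hdisj.2.2.2.1 h1
        have h3 : w ∉ I₃ := Set.disjoint_left.mp hdisj.2.2.2.2.1 h1
        simp [h1, h2, h3]
      · by_cases h2 : w ∈ I₂
        · have h3 : w ∉ I₃ := Set.disjoint_left.mp hdisj.2.2.2.2.2 h2
          simp [h1, h2, h3]
        · by_cases h3 : w ∈ I₃ <;> simp [h1, h2, h3]
    have hψpair : ∀ w w' : W, |ψ w - ψ w'| ≤ 1 := by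
      intro w w'
      obtain ⟨a1, a2⟩ := abs_le.mp be1
      obtain ⟨a3, a4⟩ := abs_le.mp be2
      obtain ⟨a5, a6⟩ := abs_le.mp be3
      obtain ⟨a7, a8⟩ := abs_le.mp b12
      obtain ⟨a9, a10⟩ := abs_le.mp b13
      obtain ⟨a11, a12⟩ := abs_le.mp b23
      rcases hvals w with h | h | h | h <;> rcases hvals w' with h' | h' | h' | h' <;>
        rw [h, h'] <;> rw [abs_le] <;> constructor <;> omega
    rw [hbig, htot]
    exact abs_cSum_Edg_le q ψ hψpair D hD.1
  · -- degenerate case: V = {p₁, p₂, p₃}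
    push_neg at hX
    have hmem : ∀ v : V, v = p₁ ∨ v = p₂ ∨ v = p₃ := by
      intro v
      by_cases h1 : v = p₁
      · exact Or.inl h1
      by_cases h2 : v = p₂
      · exact Or.inr (Or.inl h2)
      · exact Or.inr (Or.inr (hX v h1 h2))
    -- C has length exactly 3
    have hsub : C.toFinset ⊆ ({p₁, p₂, p₃} : Finset V) := by
      intro t ht
      simp only [Finset.mem_insert, Finset.mem_singleton]
      exact hmem t
    have hcard3 : ({p₁, p₂, p₃} : Finset V).card ≤ 3 := by
      apply le_trans (Finset.card_insert_le _ _)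
      have := Finset.card_insert_le p₂ ({p₃} : Finset V)
      simp at this ⊢
      omega
    have hlen : C.length = 3 := by
      have h1 : C.toFinset.card = C.length := List.toFinset_card_of_nodup hC.1
      have h2 := Finset.card_le_card hsub
      have := hC.2
      omega
    rcases C with _ | ⟨a, C1⟩
    · simp at hlen
    rcases C1 with _ | ⟨b, C2⟩
    · simp at hlen
    rcases C2 with _ | ⟨c, C3⟩
    · simp at hlen
    rcases C3 with _ | ⟨d, C4⟩
    swap
    · simp at hlen
    · have hnd : a ≠ b ∧ a ≠ c ∧ b ≠ c := by
        have h := hC.1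
        simp only [List.nodup_cons, List.mem_cons, List.mem_singleton,
          List.not_mem_nil, or_false] at h
        tauto
      obtain ⟨hab, hac, hbc⟩ := hnd
      have hval : biCycleVal lam [a, b, c] D = g a b c := by
        rw [hbig]
        simp [cycleVal]
      rw [hval]
      rcases hmem a with ha | ha | ha <;> rcases hmem b with hb | hb | hb <;>
        rcases hmem c with hc | hc | hc <;>
          first
            | exact absurd (ha.trans hb.symm) hab
            | exact absurd (ha.trans hc.symm) hac
            | exact absurd (hb.trans hc.symm) hbc
            | (rw [ha, hb, hc, gv0a]; exact habs0)
            | (rw [ha, hb, hc, gv0b, abs_neg]; exact habs0)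
            | (rw [ha, hb, hc, gv0c, abs_neg]; exact habs0)
            | (rw [ha, hb, hc, gv0d]; exact habs0)
            | (rw [ha, hb, hc, gv0e]; exact habs0)
            | (rw [ha, hb, hc, gv0f, abs_neg]; exact habs0)
end
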